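/- arXiv:1504.04517 — 6 statements merged into one kernel-verified Lean document; each statement's English description precedes it below -/
import Mathlib

section
/- Let A be a Markov automaton that couples, and let u_{-1}, u_{-2}, ... be i.i.d. letters from D. Define S_i = S · (u_{-i}, ..., u_{-1}) and let τ^b be the first i such that S_i is a singleton. Then τ^b is almost surely finite, and for all n ≥ τ^b, S_n equals S_{τ^b} (the singleton value is stable under further backward extension). -/
/-!
Let `u` be a coupling word and cut the past into consecutive blocks of `|u|` letters. The blocks
are i.i.d. with the product law, and each spells `u` backwards with probability `p = ∏ D(uᵢ) > 0`,
so none of the first `m` blocks does with probability at most `(1 - p)^m → 0`. Once a block spells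
`u`, the backward set behind it is a singleton; since the sets `S_i` decrease in `i`, a singleton
`S_i` can never change again.
-/

open MeasureTheory

/-- The backward set `S_i = S · (u_{-i}, ..., u_{-1})` of the coupling-from-the-past
construction, where `v k = u_{-(k+1)}`: the letter `u_{-i} = v (i-1)` is applied first. -/
def backSet {S A : Type} (act : S → A → S) (v : ℕ → A) (i : ℕ) : Set S :=
  Set.range fun x : S => (((List.range i).reverse).map v).foldl act x

def IsCouplingWord {S A : Type} (act : S → A → S) (u : List A) : Prop :=
  ∀ x y : S, u.foldl act x = u.foldl act y

lemma IsCouplingWord.append {S A : Type} {act : S → A → S} {u : List A}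
    (hu : IsCouplingWord act u) (p : List A) : IsCouplingWord act (u ++ p) := by
  intro x y
  simp only [List.foldl_append, hu x y]

section BackSet

variable {S A : Type} (act : S → A → S) (v : ℕ → A)

lemma backSet_succ_subset (n : ℕ) : backSet act v (n + 1) ⊆ backSet act v n := by
  rintro _ ⟨x, rfl⟩
  exact ⟨act x (v n), by simp [List.range_succ]⟩

lemma backSet_antitone : Antitone (backSet act v) :=
  antitone_nat_of_succ_le (backSet_succ_subset act v)

lemma backSet_eq_of_subsingleton {i n : ℕ} (hin : i ≤ n)
    (hi : (backSet act v i).Subsingleton) : backSet act v n = backSet act v i := by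
  rcases isEmpty_or_nonempty S with _ | _
  · simp only [backSet, Set.range_eq_empty]
  · obtain ⟨y, hy⟩ : (backSet act v n).Nonempty := Set.range_nonempty _
    have hsub := backSet_antitone act v hin
    rw [hi.eq_singleton_of_mem (hsub hy), (hi.anti hsub).eq_singleton_of_mem hy]

lemma backSet_subsingleton_of_isCouplingWord {u : List A} (hu : IsCouplingWord act u)
    {j L : ℕ} (hv : List.ofFn (fun t : Fin L => v (j + t)) = u.reverse) :
    (backSet act v (j + L)).Subsingleton := by
  have hword : ((List.range (j + L)).reverse.map v) = u ++ (List.range j).reverse.map v := by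
    rw [← List.reverse_reverse u, ← hv, List.range_add, List.reverse_append, List.map_append,
      ← List.map_coe_finRange_eq_range, List.map_map, List.ofFn_eq_map, List.map_reverse,
      List.map_map]
    rfl
  rintro _ ⟨x, rfl⟩ _ ⟨y, rfl⟩
  simp only [hword]
  exact hu.append _ x y

end BackSet

def HasIIDLaw {Ω A : Type} [MeasurableSpace Ω] (μ : Measure Ω) (U : ℕ → Ω → A)
    (D : A → ENNReal) : Prop :=
  ∀ (k : ℕ) (a : Fin k → A), μ {ω | ∀ i : Fin k, U (i : ℕ) ω = a i} = ∏ i, D (a i)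

namespace HasIIDLaw

variable {Ω A : Type} [MeasurableSpace Ω] {μ : Measure Ω} {U : ℕ → Ω → A} {D : A → ENNReal}

lemma blocks (hU : HasIIDLaw μ U D) (L : ℕ) :
    HasIIDLaw μ (fun k ω (t : Fin L) => U (L * k + t) ω) (fun b => ∏ t, D (b t)) := by
  intro m a
  have hcyl : {ω | ∀ k : Fin m, (fun t : Fin L => U (L * k + t) ω) = a k} =
      {ω | ∀ i : Fin (m * L),
        U i ω = a (finProdFinEquiv.symm i).1 (finProdFinEquiv.symm i).2} := by
    ext ω
    simp only [Set.mem_ofPred_eq, funext_iff, finProdFinEquiv.symm.forall_congr_left,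
      Equiv.symm_symm, Equiv.symm_apply_apply, Prod.forall, finProdFinEquiv_apply_val, add_comm]
  rw [hcyl, hU, ← Fintype.prod_prod_type' fun k t => D (a k t)]
  exact Fintype.prod_equiv finProdFinEquiv.symm _ _ fun _ => rfl

lemma ae_exists_eq [Fintype A] (hU : HasIIDLaw μ U D) (hD : ∑ a, D a = 1) {a : A}
    (ha : D a ≠ 0) : ∀ᵐ ω ∂μ, ∃ k, U k ω = a := by
  classical
  set q := ∑ b ∈ Finset.univ.erase a, D b
  have hqa : q + D a = 1 := hD ▸ Finset.sum_erase_add _ _ (Finset.mem_univ a)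
  have hq : q < 1 := hqa ▸
    ENNReal.lt_add_right (ne_top_of_le_ne_top ENNReal.one_ne_top (hqa ▸ le_self_add)) ha
  have hbound : ∀ m : ℕ, μ {ω | ∀ k, U k ω ≠ a} ≤ q ^ m := fun m => calc
    μ {ω | ∀ k, U k ω ≠ a}
      ≤ μ (⋃ f ∈ Fintype.piFinset fun _ : Fin m => Finset.univ.erase a,
          {ω | ∀ k : Fin m, U k ω = f k}) := by
        refine measure_mono fun ω hω => Set.mem_iUnion₂.mpr ⟨fun k => U k ω, ?_, fun _ => rfl⟩
        simpa [Fintype.mem_piFinset] using fun k : Fin m => hω k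
    _ ≤ ∑ f ∈ Fintype.piFinset (fun _ : Fin m => Finset.univ.erase a), ∏ k, D (f k) :=
        (measure_biUnion_finset_le _ _).trans_eq (Finset.sum_congr rfl fun f _ => hU m f)
    _ = q ^ m := by rw [← Finset.prod_univ_sum, Finset.prod_const, Finset.card_fin]
  rw [ae_iff]
  simpa only [not_exists, nonpos_iff_eq_zero] using
    ge_of_tendsto' (ENNReal.tendsto_pow_atTop_nhds_zero_of_lt_one hq) hbound

end HasIIDLaw

theorem stmt1_general {S A : Type} [Fintype A]
    (D : A → ENNReal) (hDsum : ∑ a, D a = 1) (hDpos : ∀ a, 0 < D a)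
    (act : S → A → S)
    (hcouple : ∃ u : List A, ∀ x y : S, u.foldl act x = u.foldl act y)
    {Ω : Type} [MeasurableSpace Ω] (μ : Measure Ω)
    (U : ℕ → Ω → A)
    (hiid : ∀ (k : ℕ) (a : Fin k → A),
      μ {ω | ∀ i : Fin k, U (i : ℕ) ω = a i} = ∏ i, D (a i)) :
    (∀ᵐ ω ∂μ, ∃ i : ℕ, (backSet act (fun k => U k ω) i).Subsingleton) ∧
    (∀ (v : ℕ → A) (i n : ℕ), i ≤ n → (backSet act v i).Subsingleton →
      backSet act v n = backSet act v i) := by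
  refine ⟨?_, fun v i n hin hi => backSet_eq_of_subsingleton act v hin hi⟩
  obtain ⟨u, hu⟩ := hcouple
  let w : Fin u.reverse.length → A := fun t => u.reverse[t]
  have hblock_law : ∑ b : Fin u.reverse.length → A, ∏ t, D (b t) = 1 := by
    rw [← Fintype.prod_sum]
    simp [hDsum]
  have hw : ∏ t, D (w t) ≠ 0 := Finset.prod_ne_zero_iff.mpr fun t _ => (hDpos (w t)).ne'
  filter_upwards [(HasIIDLaw.blocks hiid _).ae_exists_eq hblock_law hw] with ω ⟨k, hk⟩
  have hspell : List.ofFn (fun t : Fin u.reverse.length => U (u.reverse.length * k + t) ω) =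
      u.reverse := by
    rw [hk]
    exact List.ofFn_getElem
  exact ⟨_, backSet_subsingleton_of_isCouplingWord act _ hu hspell⟩

/-- For a coupling Markov automaton and i.i.d. letters
`u_{-1}, u_{-2}, ...` from `D`, the backward coupling time `τ^b` (first `i` with
`S_i` a singleton) is a.s. finite, and for all `n ≥ τ^b` (indeed for any sequence and any
`i` at which `S_i` is a singleton), `S_n = S_{τ^b}`. -/
theorem stmt1 {S A : Type} [Fintype S] [Nonempty S] [Fintype A]
    (D : A → ENNReal) (hDsum : ∑ a, D a = 1) (hDpos : ∀ a, 0 < D a)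
    (act : S → A → S)
    (hcouple : ∃ u : List A, ∀ x y : S, u.foldl act x = u.foldl act y)
    {Ω : Type} [MeasurableSpace Ω] (μ : Measure Ω) [IsProbabilityMeasure μ]
    (U : ℕ → Ω → A)
    (hiid : ∀ (k : ℕ) (a : Fin k → A),
      μ {ω | ∀ i : Fin k, U (i : ℕ) ω = a i} = ∏ i, D (a i)) :
    (∀ᵐ ω ∂μ, ∃ i : ℕ, (backSet act (fun k => U k ω) i).Subsingleton) ∧
    (∀ (v : ℕ → A) (i n : ℕ), i ≤ n → (backSet act v i).Subsingleton →
      backSet act v n = backSet act v i) :=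
  stmt1_general D hDsum hDpos act hcouple μ U hiid
end

section
/- In the coupling-from-the-past construction, the unique element of S_{τ^b} is distributed according to the stationary distribution π of the transition matrix of the Markov automaton, and the backward coupling time τ^b has the same distribution (in particular the same expectation) as the forward coupling time τ of the grand coupling. -/
/-!
Once the backward set `S_n` is a singleton, every backward chain of length `n` ends at the
output, whatever its starting state. Started from `π`, that chain has law `π ᵥ* M ^ n = π`, so the
law of the output differs from `π` by at most the probability that `S_n` is not yet a singleton.
This tends to `0`: among `m` disjoint blocks of `|u|` i.i.d. letters, one equals the synchronising
word `u` except with probability `r ^ m`, `r < 1`, and a synchronising factor makes the whole word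
synchronising.

Both coupling times are hitting times of increasing families of events, "`S · (u_{-n}, …, u_{-1})`
is a singleton" and "`S · (u_1, …, u_n)` is a singleton", and the law of such a hitting time
depends only on the probabilities of the events. Reversing the first `n` letters preserves their
joint law and exchanges the two events.
-/

open MeasureTheory
open scoped Classical

/-- Forward set `S · (u_1, ..., u_i)`. -/
def fwdSet {S A : Type} (act : S → A → S) (v : ℕ → A) (i : ℕ) : Set S :=
  Set.range fun x : S => (List.ofFn fun k : Fin i => v (k : ℕ)).foldl act x

open Set Filter Topology
open scoped ENNReal Matrix

namespace CFTP

section Words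

variable {S A : Type} (act : S → A → S)

/-- `S · w` in the paper's notation. -/
def wordImage (w : List A) : Set S := range fun x => w.foldl act x

theorem wordImage_append (w w' : List A) :
    wordImage act (w ++ w') = (fun x => w'.foldl act x) '' wordImage act w := by
  simp only [wordImage, List.foldl_append, ← range_comp, Function.comp_def]

theorem wordImage_append_subset (w w' : List A) :
    wordImage act (w ++ w') ⊆ wordImage act w' := by
  rw [wordImage_append]
  exact image_subset_range _ _

theorem subsingleton_wordImage_of_forall_foldl_eq {u : List A}
    (hu : ∀ x y : S, u.foldl act x = u.foldl act y) : (wordImage act u).Subsingleton := by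
  rintro _ ⟨x, rfl⟩ _ ⟨y, rfl⟩
  exact hu x y

theorem map_reverse_range (v : ℕ → A) (n : ℕ) :
    (List.range n).reverse.map v = List.ofFn fun i : Fin n => v (Fin.rev i) := by
  refine List.ext_getElem (by simp) fun i h _ => ?_
  simp only [List.length_map, List.length_reverse, List.length_range] at h
  simp only [List.getElem_map, List.getElem_reverse, List.getElem_range, List.getElem_ofFn,
    Fin.val_rev, List.length_range]
  congr 1
  omega

theorem backSet_eq_wordImage (v : ℕ → A) (n : ℕ) :
    backSet act v n = wordImage act (List.ofFn fun i : Fin n => v (Fin.rev i)) := by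
  rw [← map_reverse_range]
  rfl

theorem antitone_backSet (v : ℕ → A) : Antitone (backSet act v) := by
  refine antitone_nat_of_succ_le fun n => ?_
  simpa [backSet, wordImage, List.range_succ] using
    wordImage_append_subset act [v n] ((List.range n).reverse.map v)

theorem fwdSet_succ (v : ℕ → A) (n : ℕ) :
    fwdSet act v (n + 1) = (fun x => act x (v n)) '' fwdSet act v n := by
  rw [fwdSet, fwdSet, List.ofFn_succ', List.concat_eq_append]
  exact wordImage_append act _ [v n]

theorem foldl_eq_of_mem_backSet_sInf {v : ℕ → A} {n : ℕ} (hn : (backSet act v n).Subsingleton)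
    {y : S} (hy : y ∈ backSet act v (sInf {i | (backSet act v i).Subsingleton})) (x : S) :
    ((List.range n).reverse.map v).foldl act x = y := by
  have hmin : (backSet act v (sInf {i | (backSet act v i).Subsingleton})).Subsingleton :=
    Nat.sInf_mem (s := {i | (backSet act v i).Subsingleton}) ⟨n, hn⟩
  exact hmin (antitone_backSet act v (Nat.sInf_le hn) ⟨x, rfl⟩) hy

theorem monotone_subsingleton_backSet (v : ℕ → A) :
    Monotone fun n => (backSet act v n).Subsingleton :=
  fun _ _ h hs => hs.anti (antitone_backSet act v h)

theorem monotone_subsingleton_fwdSet (v : ℕ → A) :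
    Monotone fun n => (fwdSet act v n).Subsingleton :=
  monotone_nat_of_le_succ fun n hs => by rw [fwdSet_succ]; exact hs.image _

end Words

section WordWeights

variable {S A : Type} [Fintype A] (act : S → A → S) (D : A → ℝ≥0∞)

theorem sum_prod_eq_one (hD : ∑ a, D a = 1) (n : ℕ) : ∑ a : Fin n → A, ∏ i, D (a i) = 1 := by
  rw [← Fintype.prod_sum, hD, Finset.prod_const_one]

theorem sum_filter_ne_prod_lt_one (hD : ∑ a, D a = 1) (hDpos : ∀ a, 0 < D a) {n : ℕ}
    (c : Fin n → A) : ∑ b with b ≠ c, ∏ i, D (b i) < 1 := by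
  have hsplit := Finset.sum_filter_add_sum_filter_not Finset.univ (· ≠ c) fun b => ∏ i, D (b i)
  simp only [not_not, Finset.filter_eq', Finset.mem_univ, if_true, Finset.sum_singleton,
    sum_prod_eq_one D hD] at hsplit
  rw [← hsplit]
  refine ENNReal.lt_add_right (ne_top_of_le_ne_top ENNReal.one_ne_top ?_) ?_
  · exact hsplit ▸ le_self_add
  · exact Finset.prod_ne_zero_iff.mpr fun i _ => (hDpos (c i)).ne'

/-- If the block `c` synchronises, a word of length `n + L` can only fail to synchronise if
its first `n` letters fail to and its last `L` letters differ from `c`. -/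
theorem sum_filter_not_subsingleton_add_le {L : ℕ} {c : Fin L → A}
    (hc : (wordImage act (List.ofFn c)).Subsingleton) (n : ℕ) :
    ∑ a : Fin (n + L) → A with ¬ (wordImage act (List.ofFn a)).Subsingleton, ∏ i, D (a i)
      ≤ (∑ a : Fin n → A with ¬ (wordImage act (List.ofFn a)).Subsingleton, ∏ i, D (a i))
        * ∑ b with b ≠ c, ∏ i, D (b i) := by
  simp only [Finset.sum_filter]
  rw [Finset.sum_mul_sum, ← (Fin.appendEquiv n L).sum_comp, Fintype.sum_prod_type]
  refine Finset.sum_le_sum fun a _ => Finset.sum_le_sum fun b _ => ?_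
  have hword : List.ofFn (Fin.appendEquiv n L (a, b)) = List.ofFn a ++ List.ofFn b :=
    List.ofFn_fin_append a b
  have hweight : ∏ i, D (Fin.appendEquiv n L (a, b) i) = (∏ i, D (a i)) * ∏ i, D (b i) := by
    simp [Fin.prod_univ_add]
  rw [hword, hweight]
  by_cases hab : (wordImage act (List.ofFn a ++ List.ofFn b)).Subsingleton
  · simp [hab]
  have ha : ¬ (wordImage act (List.ofFn a)).Subsingleton := fun ha =>
    hab (by rw [wordImage_append]; exact ha.image _)
  have hb : b ≠ c := by
    rintro rfl
    exact hab (hc.anti (wordImage_append_subset act _ _))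
  simp [hab, ha, hb]

theorem sum_filter_not_subsingleton_le_pow (hD : ∑ a, D a = 1) {L : ℕ} {c : Fin L → A}
    (hc : (wordImage act (List.ofFn c)).Subsingleton) (m : ℕ) :
    ∑ a : Fin (m * L) → A with ¬ (wordImage act (List.ofFn a)).Subsingleton, ∏ i, D (a i)
      ≤ (∑ b with b ≠ c, ∏ i, D (b i)) ^ m := by
  induction m with
  | zero =>
    rw [pow_zero, ← sum_prod_eq_one D hD (0 * L)]
    exact Finset.sum_le_sum_of_subset (Finset.filter_subset _ _)
  | succ m ih =>
    rw [Nat.succ_mul, pow_succ]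
    exact (sum_filter_not_subsingleton_add_le act D hc _).trans (mul_le_mul_left ih _)

noncomputable def transMatrix : Matrix S S ℝ≥0∞ :=
  Matrix.of fun x y => ∑ a, if act x a = y then D a else 0

variable [Fintype S]

theorem sum_filter_foldl_eq_prod_eq_pow (n : ℕ) (x y : S) :
    ∑ a : Fin n → A with (List.ofFn a).foldl act x = y, ∏ i, D (a i)
      = (transMatrix act D ^ n) x y := by
  induction n generalizing x with
  | zero => rw [pow_zero, Matrix.one_apply]; split_ifs <;> simp [*]
  | succ n ih =>
    have hfirst : ∀ b, ∑ c : Fin n → A,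
        (if (List.ofFn c).foldl act (act x b) = y then D b * ∏ i, D (c i) else 0)
          = D b * (transMatrix act D ^ n) (act x b) y := by
      intro b
      rw [← ih, Finset.sum_filter, Finset.mul_sum]
      exact Finset.sum_congr rfl fun c _ => by split_ifs <;> simp
    rw [Finset.sum_filter, ← (Fin.consEquiv fun _ => A).sum_comp, Fintype.sum_prod_type,
      pow_succ', Matrix.mul_apply]
    simp only [Fin.consEquiv_apply, List.ofFn_succ, Fin.cons_zero, Fin.cons_succ,
      List.foldl_cons, Fin.prod_univ_succ, hfirst, transMatrix, Matrix.of_apply,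
      Finset.sum_mul, ite_mul, zero_mul]
    rw [Finset.sum_comm]
    simp

theorem vecMul_pow_eq_self {M : Matrix S S ℝ≥0∞} {π : S → ℝ≥0∞} (h : π ᵥ* M = π) (n : ℕ) :
    π ᵥ* M ^ n = π := by
  induction n with
  | zero => simp
  | succ n ih => rw [pow_succ, ← Matrix.vecMul_vecMul, ih, h]

end WordWeights

section Fibres

variable {Ω : Type*} [MeasurableSpace Ω] {μ : Measure Ω}

/-- `s` differs from its measurable hull `t` by `sᶜ ∩ t`, which the hypothesis makes null. -/
theorem nullMeasurableSet_of_measure_add_compl_le [IsFiniteMeasure μ] {s : Set Ω}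
    (h : μ s + μ sᶜ ≤ μ univ) : NullMeasurableSet s μ := by
  set t := toMeasurable μ s
  have hts : s ⊆ t := subset_toMeasurable μ s
  have hsplit : μ (sᶜ ∩ t) + μ tᶜ = μ sᶜ := by
    rw [← measure_inter_add_sdiff sᶜ (measurableSet_toMeasurable μ s),
      sdiff_eq_compl_inter, inter_eq_left.mpr (compl_subset_compl.mpr hts)]
  have hcompl : μ tᶜ = μ univ - μ s := by
    rw [measure_compl (measurableSet_toMeasurable μ s) (measure_ne_top μ _),
      measure_toMeasurable]
  have hnull : μ (sᶜ ∩ t) = 0 := by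
    have hle : μ (sᶜ ∩ t) + μ tᶜ ≤ 0 + μ tᶜ := by
      rw [hsplit, zero_add, hcompl]
      exact ENNReal.le_sub_of_add_le_left (measure_ne_top μ _) h
    exact nonpos_iff_eq_zero.mp ((ENNReal.add_le_add_iff_right (measure_ne_top μ _)).mp hle)
  refine (measurableSet_toMeasurable μ s).nullMeasurableSet.congr (ae_eq_set.mpr ⟨?_, ?_⟩)
  · rwa [sdiff_eq_compl_inter]
  · rw [sdiff_eq_empty.mpr hts, measure_empty]

variable {α : Type*} [Fintype α] {f : Ω → α} {p : α → ℝ≥0∞}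

theorem measure_le_sum_of_fibres (hf : ∀ a, μ (f ⁻¹' {a}) = p a) (P : α → Prop) [DecidablePred P] :
    μ {ω | P (f ω)} ≤ ∑ a with P a, p a := by
  calc μ {ω | P (f ω)} = μ (⋃ a ∈ Finset.univ.filter P, f ⁻¹' {a}) := by
        congr 1; ext; simp
    _ ≤ ∑ a with P a, μ (f ⁻¹' {a}) := measure_biUnion_finset_le _ _
    _ = ∑ a with P a, p a := by simp only [hf]

/-- Subadditivity bounds `μ {P ∘ f}` and `μ {¬ P ∘ f}` by the fibre sums, and these bounds
add up to the total mass, so no measurability of `f` is needed. -/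
theorem measure_eq_sum_of_fibres [IsFiniteMeasure μ] (hf : ∀ a, μ (f ⁻¹' {a}) = p a)
    (hp : ∑ a, p a = μ univ) (P : α → Prop) [DecidablePred P] :
    μ {ω | P (f ω)} = ∑ a with P a, p a := by
  have hsum : ∑ a with P a, p a + ∑ a with ¬ P a, p a = μ univ := by
    rw [Finset.sum_filter_add_sum_filter_not, hp]
  have hcover : μ univ ≤ μ {ω | P (f ω)} + μ {ω | ¬ P (f ω)} := by
    simpa [← ofPred_or, em] using measure_union_le (μ := μ) {ω | P (f ω)} {ω | ¬ P (f ω)}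
  have hfin : ∑ a with ¬ P a, p a ≠ ∞ :=
    ne_top_of_le_ne_top (measure_ne_top μ univ) (hsum ▸ le_add_self)
  refine le_antisymm (measure_le_sum_of_fibres hf P) ?_
  rw [← ENNReal.add_le_add_iff_right hfin, hsum]
  exact hcover.trans (add_le_add le_rfl (measure_le_sum_of_fibres hf fun a => ¬ P a))

theorem nullMeasurableSet_of_fibres [IsFiniteMeasure μ] (hf : ∀ a, μ (f ⁻¹' {a}) = p a)
    (hp : ∑ a, p a = μ univ) (P : α → Prop) [DecidablePred P] :
    NullMeasurableSet {ω | P (f ω)} μ := by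
  refine nullMeasurableSet_of_measure_add_compl_le (le_of_eq ?_)
  rw [compl_ofPred, measure_eq_sum_of_fibres hf hp, measure_eq_sum_of_fibres hf hp (fun a => ¬ P a),
    Finset.sum_filter_add_sum_filter_not, hp]

end Fibres

section HitTime

variable {Ω : Type*} {E F : ℕ → Set Ω}

/-- It is `0` when `ω` lies in no `E n`, as `sInf ∅ = 0`. -/
noncomputable def hitTime (E : ℕ → Set Ω) (ω : Ω) : ℕ := sInf {n | ω ∈ E n}

theorem setOf_hitTime_eq_zero : {ω | hitTime E ω = 0} = E 0 ∪ (⋃ n, E n)ᶜ := by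
  ext ω
  simp [hitTime, Nat.sInf_eq_zero, Set.eq_empty_iff_forall_notMem]

theorem setOf_hitTime_eq_succ (hE : Monotone E) (k : ℕ) :
    {ω | hitTime E ω = k + 1} = E (k + 1) \ E k := by
  ext ω
  exact Nat.sInf_upward_closed_eq_succ_iff (fun _ _ h hω => hE h hω) k

variable [MeasurableSpace Ω] {μ : Measure Ω}

theorem nullMeasurableSet_setOf_hitTime_eq (hE : Monotone E)
    (hEm : ∀ n, NullMeasurableSet (E n) μ) (k : ℕ) : NullMeasurableSet {ω | hitTime E ω = k} μ := by
  cases k with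
  | zero => rw [setOf_hitTime_eq_zero]; exact (hEm 0).union (.compl (.iUnion hEm))
  | succ k => rw [setOf_hitTime_eq_succ hE]; exact (hEm _).diff (hEm k)

theorem measure_setOf_hitTime_eq_zero [IsFiniteMeasure μ] (hE : Monotone E)
    (hEm : ∀ n, NullMeasurableSet (E n) μ) :
    μ {ω | hitTime E ω = 0} = μ (E 0) + (μ univ - ⨆ n, μ (E n)) := by
  have hdisj : Disjoint (E 0) (⋃ n, E n)ᶜ :=
    disjoint_compl_right_iff_subset.mpr (subset_iUnion E 0)
  rw [setOf_hitTime_eq_zero, measure_union₀ (.compl (.iUnion hEm)) hdisj.aedisjoint,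
    measure_compl₀ (.iUnion hEm) (measure_ne_top μ _), hE.measure_iUnion]

theorem measure_setOf_hitTime_eq_succ [IsFiniteMeasure μ] (hE : Monotone E)
    (hEm : ∀ n, NullMeasurableSet (E n) μ) (k : ℕ) :
    μ {ω | hitTime E ω = k + 1} = μ (E (k + 1)) - μ (E k) := by
  rw [setOf_hitTime_eq_succ hE, measure_sdiff (hE k.le_succ) (hEm k) (measure_ne_top μ _)]

theorem measure_setOf_hitTime_eq_of_measure_eq [IsFiniteMeasure μ] (hE : Monotone E)
    (hF : Monotone F) (hEm : ∀ n, NullMeasurableSet (E n) μ)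
    (hFm : ∀ n, NullMeasurableSet (F n) μ) (h : ∀ n, μ (E n) = μ (F n)) (k : ℕ) :
    μ {ω | hitTime E ω = k} = μ {ω | hitTime F ω = k} := by
  cases k with
  | zero =>
    simp only [measure_setOf_hitTime_eq_zero hE hEm, measure_setOf_hitTime_eq_zero hF hFm, h]
  | succ k => rw [measure_setOf_hitTime_eq_succ hE hEm, measure_setOf_hitTime_eq_succ hF hFm, h, h]

theorem aemeasurable_hitTime (hE : Monotone E) (hEm : ∀ n, NullMeasurableSet (E n) μ) :
    AEMeasurable (hitTime E) μ :=
  NullMeasurable.aemeasurable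
    (measurable_to_countable' fun k => nullMeasurableSet_setOf_hitTime_eq hE hEm k)

theorem map_hitTime_eq_of_measure_eq [IsFiniteMeasure μ] (hE : Monotone E) (hF : Monotone F)
    (hEm : ∀ n, NullMeasurableSet (E n) μ) (hFm : ∀ n, NullMeasurableSet (F n) μ)
    (h : ∀ n, μ (E n) = μ (F n)) : μ.map (hitTime E) = μ.map (hitTime F) := by
  refine Measure.ext_iff_singleton.mpr fun k => ?_
  rw [Measure.map_apply_of_aemeasurable (aemeasurable_hitTime hE hEm) (measurableSet_singleton k),
    Measure.map_apply_of_aemeasurable (aemeasurable_hitTime hF hFm) (measurableSet_singleton k)]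
  exact measure_setOf_hitTime_eq_of_measure_eq hE hF hEm hFm h k

end HitTime

section Coupling

variable {Ω S : Type*} [MeasurableSpace Ω] {μ : Measure Ω}

theorem measure_le_add_measure_compl {s t E : Set Ω} (h : s ∩ E ⊆ t) : μ s ≤ μ t + μ Eᶜ := by
  refine (measure_mono fun ω hω => ?_).trans (measure_union_le t Eᶜ)
  by_cases hE : ω ∈ E
  exacts [Or.inl (h ⟨hω, hE⟩), Or.inr hE]

/-- The coupling inequality: `X` agrees with every chain `Y n x` on `E n`, so its law differs
from that of the chain started from `π` by at most `μ (E n)ᶜ`. -/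
theorem measure_eq_of_coupling [Fintype S] {π : S → ℝ≥0∞} (hπ : ∑ x, π x = 1) {X : Ω → S}
    {Y : ℕ → S → Ω → S} {E : ℕ → Set Ω} (hY : ∀ n y, ∑ x, π x * μ {ω | Y n x ω = y} = π y)
    (hXY : ∀ n x, ∀ ω ∈ E n, Y n x ω = X ω) (hE : Tendsto (fun n => μ (E n)ᶜ) atTop (𝓝 0))
    (y : S) : μ {ω | X ω = y} = π y := by
  have havg : ∀ {b c : S → ℝ≥0∞} {ε : ℝ≥0∞}, (∀ x, b x ≤ c x + ε) →
      ∑ x, π x * b x ≤ ∑ x, π x * c x + ε := by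
    intro b c ε h
    calc ∑ x, π x * b x ≤ ∑ x, π x * (c x + ε) := by gcongr with x; exact h x
      _ = ∑ x, π x * c x + ε := by
        simp only [mul_add, Finset.sum_add_distrib, ← Finset.sum_mul, hπ, one_mul]
  have hconst : ∀ a : ℝ≥0∞, ∑ x, π x * a = a := fun a => by rw [← Finset.sum_mul, hπ, one_mul]
  have hlim : ∀ {a b : ℝ≥0∞}, (∀ n, a ≤ b + μ (E n)ᶜ) → a ≤ b := fun h =>
    ge_of_tendsto' (by simpa using tendsto_const_nhds.add hE) h
  refine le_antisymm (hlim fun n => ?_) (hlim fun n => ?_)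
  · rw [← hconst (μ {ω | X ω = y}), ← hY n y]
    exact havg fun x => measure_le_add_measure_compl fun ω ⟨hω, hωE⟩ =>
      (hXY n x ω hωE).trans hω
  · rw [← hconst (μ {ω | X ω = y}), ← hY n y]
    exact havg fun x => measure_le_add_measure_compl fun ω ⟨hω, hωE⟩ =>
      (hXY n x ω hωE).symm.trans hω

end Coupling

section IIDLetters

variable {A Ω : Type} [MeasurableSpace Ω] {μ : Measure Ω} {D : A → ℝ≥0∞} {U : ℕ → Ω → A}

/-- Only the cylinder probabilities are prescribed: the letters `U k` need not be measurable. -/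
def IsIIDWithLaw (μ : Measure Ω) (U : ℕ → Ω → A) (D : A → ℝ≥0∞) : Prop :=
  ∀ (k : ℕ) (a : Fin k → A), μ {ω | ∀ i : Fin k, U (i : ℕ) ω = a i} = ∏ i, D (a i)

theorem measure_preimage_prefix_singleton (hiid : IsIIDWithLaw μ U D) (n : ℕ) (a : Fin n → A) :
    μ ((fun ω (i : Fin n) => U i ω) ⁻¹' {a}) = ∏ i, D (a i) := by
  rw [← hiid n a]
  congr 1
  ext ω
  simp [funext_iff]

theorem measure_preimage_revPrefix_singleton (hiid : IsIIDWithLaw μ U D) (n : ℕ) (a : Fin n → A) :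
    μ ((fun ω (i : Fin n) => U (Fin.rev i) ω) ⁻¹' {a}) = ∏ i, D (a i) := by
  rw [← Equiv.prod_comp Fin.revPerm, ← measure_preimage_prefix_singleton hiid]
  congr 1
  ext ω
  simp only [mem_preimage, mem_singleton_iff, funext_iff]
  exact Fin.revPerm.forall_congr (by simp)

variable [Fintype A] [IsProbabilityMeasure μ]

theorem measure_setOf_prefix (hD : ∑ a, D a = 1)
    (hiid : IsIIDWithLaw μ U D) (n : ℕ) (P : (Fin n → A) → Prop) [DecidablePred P] :
    μ {ω | P fun i => U i ω} = ∑ a with P a, ∏ i, D (a i) :=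
  measure_eq_sum_of_fibres (measure_preimage_prefix_singleton hiid n)
    (by rw [measure_univ, sum_prod_eq_one D hD]) P

theorem measure_setOf_revPrefix (hD : ∑ a, D a = 1)
    (hiid : IsIIDWithLaw μ U D) (n : ℕ) (P : (Fin n → A) → Prop) [DecidablePred P] :
    μ {ω | P fun i => U (Fin.rev i) ω} = ∑ a with P a, ∏ i, D (a i) :=
  measure_eq_sum_of_fibres (measure_preimage_revPrefix_singleton hiid n)
    (by rw [measure_univ, sum_prod_eq_one D hD]) P

theorem nullMeasurableSet_setOf_prefix (hD : ∑ a, D a = 1)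
    (hiid : IsIIDWithLaw μ U D) (n : ℕ) (P : (Fin n → A) → Prop) :
    NullMeasurableSet {ω | P fun i => U i ω} μ :=
  nullMeasurableSet_of_fibres (measure_preimage_prefix_singleton hiid n)
    (by rw [measure_univ, sum_prod_eq_one D hD]) P

theorem nullMeasurableSet_setOf_revPrefix (hD : ∑ a, D a = 1)
    (hiid : IsIIDWithLaw μ U D) (n : ℕ) (P : (Fin n → A) → Prop) :
    NullMeasurableSet {ω | P fun i => U (Fin.rev i) ω} μ :=
  nullMeasurableSet_of_fibres (measure_preimage_revPrefix_singleton hiid n)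
    (by rw [measure_univ, sum_prod_eq_one D hD]) P

variable {S : Type} (act : S → A → S)

theorem measure_foldl_backward_eq_pow [Fintype S] (hD : ∑ a, D a = 1)
    (hiid : IsIIDWithLaw μ U D) (n : ℕ) (x y : S) :
    μ {ω | ((List.range n).reverse.map fun k => U k ω).foldl act x = y}
      = (transMatrix act D ^ n) x y := by
  simp only [map_reverse_range]
  rw [measure_setOf_revPrefix hD hiid n fun a => (List.ofFn a).foldl act x = y]
  exact sum_filter_foldl_eq_prod_eq_pow act D n x y

/-- Among `m` blocks of `|u|` letters, one equals the synchronising word `u` except with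
probability at most `r ^ m` for some `r < 1`. -/
theorem tendsto_measure_compl_subsingleton_backSet (hD : ∑ a, D a = 1) (hDpos : ∀ a, 0 < D a)
    (hiid : IsIIDWithLaw μ U D) {u : List A} (hu : ∀ x y : S, u.foldl act x = u.foldl act y) :
    Tendsto (fun m => μ {ω | (backSet act (fun k => U k ω) (m * u.length)).Subsingleton}ᶜ)
      atTop (𝓝 0) := by
  have hc : (wordImage act (List.ofFn u.get)).Subsingleton := by
    rw [List.ofFn_get]
    exact subsingleton_wordImage_of_forall_foldl_eq act hu
  refine tendsto_of_tendsto_of_tendsto_of_le_of_le tendsto_const_nhds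
    (ENNReal.tendsto_pow_atTop_nhds_zero_of_lt_one (sum_filter_ne_prod_lt_one D hD hDpos u.get))
    (fun _ => bot_le) fun m => ?_
  simp only [backSet_eq_wordImage, compl_ofPred]
  rw [measure_setOf_revPrefix hD hiid _ fun a => ¬ (wordImage act (List.ofFn a)).Subsingleton]
  exact sum_filter_not_subsingleton_le_pow act D hD hc m

theorem measure_eq_of_mem_backSet_sInf [Fintype S] (hD : ∑ a, D a = 1) (hDpos : ∀ a, 0 < D a)
    (hiid : IsIIDWithLaw μ U D)
    {u : List A} (hu : ∀ x y : S, u.foldl act x = u.foldl act y) {π : S → ℝ≥0∞}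
    (hπ : ∑ x, π x = 1) (hstat : π ᵥ* transMatrix act D = π) {out : Ω → S}
    (hout : ∀ ω, out ω ∈
      backSet act (fun k => U k ω) (sInf {i | (backSet act (fun k => U k ω) i).Subsingleton}))
    (y : S) : μ {ω | out ω = y} = π y := by
  refine measure_eq_of_coupling hπ
    (Y := fun m x ω => ((List.range (m * u.length)).reverse.map fun k => U k ω).foldl act x)
    (fun m y => ?_) (fun m x ω hω => foldl_eq_of_mem_backSet_sInf act hω (hout ω) x)
    (tendsto_measure_compl_subsingleton_backSet act hD hDpos hiid hu) y
  simp only [measure_foldl_backward_eq_pow act hD hiid]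
  exact congrFun (vecMul_pow_eq_self hstat _) y

theorem map_sInf_backSet_eq_map_sInf_fwdSet (hD : ∑ a, D a = 1) (hiid : IsIIDWithLaw μ U D) :
    μ.map (fun ω => sInf {i | (backSet act (fun k => U k ω) i).Subsingleton})
      = μ.map (fun ω => sInf {i | (fwdSet act (fun k => U k ω) i).Subsingleton}) := by
  have hback : ∀ n, {ω | (backSet act (fun k => U k ω) n).Subsingleton}
      = {ω | (wordImage act (List.ofFn fun i : Fin n => U (Fin.rev i) ω)).Subsingleton} :=
    fun n => by simp only [backSet_eq_wordImage]
  refine map_hitTime_eq_of_measure_eq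
    (E := fun n => {ω | (backSet act (fun k => U k ω) n).Subsingleton})
    (F := fun n => {ω | (fwdSet act (fun k => U k ω) n).Subsingleton})
    (fun _ _ h _ hω => monotone_subsingleton_backSet act _ h hω)
    (fun _ _ h _ hω => monotone_subsingleton_fwdSet act _ h hω)
    (fun n => hback n ▸ nullMeasurableSet_setOf_revPrefix hD hiid n
      fun a => (wordImage act (List.ofFn a)).Subsingleton)
    (fun n => nullMeasurableSet_setOf_prefix hD hiid n
      fun a => (wordImage act (List.ofFn a)).Subsingleton) fun n => ?_
  rw [hback, measure_setOf_revPrefix hD hiid n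
    fun a => (wordImage act (List.ofFn a)).Subsingleton]
  exact (measure_setOf_prefix hD hiid n _).symm

end IIDLetters

end CFTP

theorem stmt2_general {S A : Type} [Fintype S] [Fintype A]
    (D : A → ENNReal) (hDsum : ∑ a, D a = 1) (hDpos : ∀ a, 0 < D a)
    (act : S → A → S)
    (hcouple : ∃ u : List A, ∀ x y : S, u.foldl act x = u.foldl act y)
    (π : S → ENNReal) (hπsum : ∑ x, π x = 1)
    (hstat : ∀ y, ∑ x, π x * (∑ a, if act x a = y then D a else 0) = π y)
    {Ω : Type} [MeasurableSpace Ω] (μ : Measure Ω) [IsProbabilityMeasure μ]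
    (U : ℕ → Ω → A)
    (hiid : ∀ (k : ℕ) (a : Fin k → A),
      μ {ω | ∀ i : Fin k, U (i : ℕ) ω = a i} = ∏ i, D (a i))
    (out : Ω → S)
    (hout : ∀ ω, out ω ∈
      backSet act (fun k => U k ω)
        (sInf {i | (backSet act (fun k => U k ω) i).Subsingleton})) :
    (∀ x : S, μ {ω | out ω = x} = π x) ∧
    μ.map (fun ω => sInf {i | (backSet act (fun k => U k ω) i).Subsingleton})
      = μ.map (fun ω => sInf {i | (fwdSet act (fun k => U k ω) i).Subsingleton}) := by
  obtain ⟨u, hu⟩ := hcouple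
  exact ⟨CFTP.measure_eq_of_mem_backSet_sInf act hDsum hDpos hiid hu hπsum (funext hstat) hout,
    CFTP.map_sInf_backSet_eq_map_sInf_fwdSet act hDsum hiid⟩

/-- in CFTP, the unique element of `S_{τ^b}` is distributed according to
the stationary distribution `π` of the transition matrix `M(x,y) = Σ_{a : x·a = y} D(a)`,
and the backward coupling time `τ^b` has the same distribution as the forward coupling
time `τ` of the grand coupling. -/
theorem stmt2 {S A : Type} [Fintype S] [Nonempty S] [MeasurableSpace S]
    [MeasurableSingletonClass S] [Fintype A]
    (D : A → ENNReal) (hDsum : ∑ a, D a = 1) (hDpos : ∀ a, 0 < D a)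
    (act : S → A → S)
    (hcouple : ∃ u : List A, ∀ x y : S, u.foldl act x = u.foldl act y)
    (π : S → ENNReal) (hπsum : ∑ x, π x = 1)
    (hstat : ∀ y, ∑ x, π x * (∑ a, if act x a = y then D a else 0) = π y)
    {Ω : Type} [MeasurableSpace Ω] (μ : Measure Ω) [IsProbabilityMeasure μ]
    (U : ℕ → Ω → A)
    (hiid : ∀ (k : ℕ) (a : Fin k → A),
      μ {ω | ∀ i : Fin k, U (i : ℕ) ω = a i} = ∏ i, D (a i))
    (out : Ω → S)
    (hout : ∀ ω, out ω ∈
      backSet act (fun k => U k ω)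
        (sInf {i | (backSet act (fun k => U k ω) i).Subsingleton})) :
    (∀ x : S, μ {ω | out ω = x} = π x) ∧
    μ.map (fun ω => sInf {i | (backSet act (fun k => U k ω) i).Subsingleton})
      = μ.map (fun ω => sInf {i | (fwdSet act (fun k => U k ω) i).Subsingleton}) :=
  stmt2_general D hDsum hDpos act hcouple π hπsum hstat μ U hiid out hout
end

section
/- Let τ_O be the coupling time of the oracle-skipping bounding chain (where each letter is drawn from D conditioned on being active for the current bounding set) and τ_I the coupling time of the incremental-skipping bounding chain (where after each passive letter that letter is removed from the support of D until the next active letter is read). Then τ_O ≤ τ_I ≤ M · τ_O, where M = |A| is the size of the alphabet, under the natural coupling in which both chains are obtained from a common i.i.d. sequence by removing passive letters. -/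
/-- Bounding set reached after reading the first `j` letters of the sequence `v`. -/
def boundAt {S A : Type} (op : Set S → A → Set S) (v : ℕ → A) (j : ℕ) : Set S :=
  (List.ofFn fun k : Fin j => v (k : ℕ)).foldl op Set.univ

/-- The letter `v j` is active at position `j` (it changes the bounding set). -/
def ActiveAt {S A : Type} (op : Set S → A → Set S) (v : ℕ → A) (j : ℕ) : Prop :=
  op (boundAt op v j) (v j) ≠ boundAt op v j

/-!
Passive letters do not move the bounding set, so after `j` letters the incremental chain is in
the bounding set the oracle chain reaches after the active letters among them; hence
`τ_O ≤ τ_I`. Every letter of a run of passive letters is passive for the bounding set in force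
when the active letter closing the run is read, so it differs from that letter; together with
the distinctness of the passive letters, the run and its closing letter are pairwise distinct,
hence at most `M` letters long. So the `m`-th active letter stands before position `M (m + 1)`,
which gives `τ_I ≤ M τ_O`.
-/

open Finset

lemma Nat.count_apply_eq_of_strictMono {p : ℕ → Prop} [DecidablePred p] {φ : ℕ → ℕ}
    (hφ : StrictMono φ) (hp : ∀ j, j ∈ Set.range φ ↔ p j) (m : ℕ) :
    Nat.count p (φ m) = m := by
  have hfilter : {j ∈ range (φ m) | p j} = (range m).image φ := by
    ext j
    simp only [mem_filter, mem_range, mem_image, ← hp]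
    constructor
    · rintro ⟨hj, k, rfl⟩
      exact ⟨k, hφ.lt_iff_lt.mp hj, rfl⟩
    · rintro ⟨k, hk, rfl⟩
      exact ⟨hφ hk, k, rfl⟩
  rw [Nat.count_eq_card_filter_range, hfilter, Finset.card_image_of_injective _ hφ.injective,
    card_range]

section Passive

variable {S A : Type} {op : Set S → A → Set S} {v : ℕ → A}

lemma boundAt_succ (j : ℕ) : boundAt op v (j + 1) = op (boundAt op v j) (v j) := by
  rw [boundAt, boundAt, List.ofFn_succ', List.concat_eq_append, List.foldl_append]
  rfl

lemma boundAt_succ_of_not_activeAt {j : ℕ} (h : ¬ ActiveAt op v j) :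
    boundAt op v (j + 1) = boundAt op v j := by
  rw [boundAt_succ]
  exact not_not.mp h

lemma boundAt_eq_of_passive_run {s p : ℕ}
    (hpass : ∀ l, s ≤ l → l < p → ¬ ActiveAt op v l)
    {l : ℕ} (hsl : s ≤ l) (hlp : l ≤ p) : boundAt op v l = boundAt op v s := by
  induction l, hsl using Nat.le_induction with
  | base => rfl
  | succ l hsl ih =>
    rw [boundAt_succ_of_not_activeAt (hpass l hsl (by omega)), ih (by omega)]

lemma injOn_Icc_of_passive_run
    (hdist : ∀ j k, j < k → (∀ l, j ≤ l → l ≤ k → ¬ ActiveAt op v l) → v j ≠ v k)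
    {s p : ℕ} (hpass : ∀ l, s ≤ l → l < p → ¬ ActiveAt op v l) (hp : ActiveAt op v p) :
    Set.InjOn v (Icc s p) := by
  have hne : ∀ j ∈ Icc s p, ∀ k ∈ Icc s p, j < k → v j ≠ v k := by
    intro j hj k hk hjk
    rw [mem_Icc] at hj hk
    obtain hkp | rfl := hk.2.lt_or_eq
    · exact hdist j k hjk fun l hjl hlk => hpass l (hj.1.trans hjl) (by omega)
    · intro hvjk
      apply hp
      have hj_pass := not_not.mp (hpass j hj.1 hjk)
      rwa [boundAt_eq_of_passive_run hpass hj.1 hj.2,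
        ← boundAt_eq_of_passive_run hpass hk.1 le_rfl, hvjk] at hj_pass
  intro j hj k hk hvjk
  rcases lt_trichotomy j k with hjk | rfl | hkj
  · exact absurd hvjk (hne j hj k hk hjk)
  · rfl
  · exact absurd hvjk.symm (hne k hk j hj hkj)

lemma lt_add_card_of_passive_run [Fintype A]
    (hdist : ∀ j k, j < k → (∀ l, j ≤ l → l ≤ k → ¬ ActiveAt op v l) → v j ≠ v k)
    {s p : ℕ} (hpass : ∀ l, s ≤ l → l < p → ¬ ActiveAt op v l) (hp : ActiveAt op v p) :
    p < s + Fintype.card A := by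
  have hcard := card_le_card_of_injOn (t := univ) v (fun _ _ => mem_univ _)
    (injOn_Icc_of_passive_run hdist hpass hp)
  rw [Nat.card_Icc, card_univ] at hcard
  omega

end Passive

section Coupling

variable {S A : Type} {op : Set S → A → Set S} {vI vO : ℕ → A} {φ : ℕ → ℕ}

lemma boundAt_eq_boundAt_count [DecidablePred (ActiveAt op vI)] (hφ : StrictMono φ)
    (hsub : ∀ i, vO i = vI (φ i)) (hact : ∀ j, j ∈ Set.range φ ↔ ActiveAt op vI j)
    (j : ℕ) :
    boundAt op vI j = boundAt op vO (Nat.count (ActiveAt op vI) j) := by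
  induction j with
  | zero => rfl
  | succ j ih =>
    by_cases hj : ActiveAt op vI j
    · obtain ⟨m, rfl⟩ := (hact j).mpr hj
      rw [Nat.count_succ, if_pos hj, Nat.count_apply_eq_of_strictMono hφ hact, boundAt_succ,
        boundAt_succ, ih, Nat.count_apply_eq_of_strictMono hφ hact, hsub]
    · rw [Nat.count_succ, if_neg hj, add_zero, boundAt_succ_of_not_activeAt hj, ih]

lemma exists_le_boundAt_eq (hφ : StrictMono φ) (hsub : ∀ i, vO i = vI (φ i))
    (hact : ∀ j, j ∈ Set.range φ ↔ ActiveAt op vI j) (j : ℕ) :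
    ∃ i ≤ j, boundAt op vO i = boundAt op vI j := by
  classical
  exact ⟨_, Nat.count_le _, (boundAt_eq_boundAt_count hφ hsub hact j).symm⟩

lemma apply_lt_card_mul [Fintype A] (hφ : StrictMono φ)
    (hact : ∀ j, j ∈ Set.range φ ↔ ActiveAt op vI j)
    (hdist : ∀ j k, j < k →
      (∀ l, j ≤ l → l ≤ k → ¬ ActiveAt op vI l) → vI j ≠ vI k)
    (m : ℕ) : φ m < Fintype.card A * (m + 1) := by
  induction m with
  | zero =>
    have hpass : ∀ l, 0 ≤ l → l < φ 0 → ¬ ActiveAt op vI l := by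
      rintro l - hl hl_act
      obtain ⟨k, rfl⟩ := (hact l).mpr hl_act
      exact (hφ.monotone k.zero_le).not_gt hl
    simpa using lt_add_card_of_passive_run hdist hpass ((hact _).mp ⟨0, rfl⟩)
  | succ m ih =>
    have hpass : ∀ l, φ m + 1 ≤ l → l < φ (m + 1) → ¬ ActiveAt op vI l := by
      rintro l hml hl hl_act
      obtain ⟨k, rfl⟩ := (hact l).mpr hl_act
      have hkm : k ≤ m := Nat.lt_succ_iff.mp (hφ.lt_iff_lt.mp hl)
      exact (hφ.monotone hkm).not_gt hml
    have := lt_add_card_of_passive_run hdist hpass ((hact _).mp ⟨m + 1, rfl⟩)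
    rw [Nat.mul_succ]
    omega

lemma exists_le_card_mul_boundAt_eq [Fintype A] (hφ : StrictMono φ)
    (hsub : ∀ i, vO i = vI (φ i)) (hact : ∀ j, j ∈ Set.range φ ↔ ActiveAt op vI j)
    (hdist : ∀ j k, j < k →
      (∀ l, j ≤ l → l ≤ k → ¬ ActiveAt op vI l) → vI j ≠ vI k) :
    ∀ i, ∃ j ≤ Fintype.card A * i, boundAt op vI j = boundAt op vO i
  | 0 => ⟨0, le_rfl, rfl⟩
  | m + 1 => by
    classical
    refine ⟨φ m + 1, apply_lt_card_mul hφ hact hdist m, ?_⟩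
    rw [boundAt_eq_boundAt_count hφ hsub hact, Nat.count_succ,
      if_pos ((hact _).mp ⟨m, rfl⟩), Nat.count_apply_eq_of_strictMono hφ hact]

end Coupling

/-- under the natural coupling in which the oracle-skipping sequence `vO`
is the subsequence of the incremental-skipping sequence `vI` consisting of exactly its
active letters (via the strictly monotone index map `φ`), and in which between two
consecutive active letters of `vI` the passive letters are pairwise distinct, the
coupling times satisfy `τ_O ≤ τ_I ≤ M · τ_O` where `M = |A|`. -/
theorem stmt4 {S A : Type} [Fintype A]
    (op : Set S → A → Set S)
    (vI vO : ℕ → A) (φ : ℕ → ℕ) (hφ : StrictMono φ)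
    (hsub : ∀ i, vO i = vI (φ i))
    (hact : ∀ j, j ∈ Set.range φ ↔ ActiveAt op vI j)
    (hdist : ∀ j k, j < k →
      (∀ l, j ≤ l → l ≤ k → ¬ ActiveAt op vI l) → vI j ≠ vI k)
    (hI : ∃ i, (boundAt op vI i).Subsingleton) :
    {i | (boundAt op vO i).Subsingleton}.Nonempty ∧
    sInf {i | (boundAt op vO i).Subsingleton}
      ≤ sInf {i | (boundAt op vI i).Subsingleton} ∧
    sInf {i | (boundAt op vI i).Subsingleton}
      ≤ Fintype.card A * sInf {i | (boundAt op vO i).Subsingleton} := by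
  set TO := {i | (boundAt op vO i).Subsingleton}
  set TI := {i | (boundAt op vI i).Subsingleton}
  obtain ⟨i, hiI, hbO⟩ := exists_le_boundAt_eq hφ hsub hact (sInf TI)
  have hO : (boundAt op vO i).Subsingleton := hbO ▸ Nat.sInf_mem hI
  refine ⟨⟨i, hO⟩, (Nat.sInf_le hO).trans hiI, ?_⟩
  obtain ⟨j, hjO, hbI⟩ := exists_le_card_mul_boundAt_eq hφ hsub hact hdist (sInf TO)
  have hj : (boundAt op vI j).Subsingleton := hbI ▸ Nat.sInf_mem (s := TO) ⟨i, hO⟩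
  exact (Nat.sInf_le hj).trans hjO
end

section
/- Contraction is idempotent: for every history h and every word u over the alphabet with delimiter, c^h(c^h(u)) = c^h(u), where c^h removes passive letters relative to the evolving bounding set starting from S∘h. -/
open scoped Classical

/-- Bounding set reached from the full state space after reading the history `h`. -/
def wordOp {S A : Type} (op : Set S → A → Set S) (h : List A) : Set S :=
  h.foldl op Set.univ

/-- A letter is active after history `h` if it is the delimiter `♯` or changes the
bounding set `S ∘ h`. -/
def IsActive {S A : Type} (op : Set S → A → Set S) (sharp : A) (h : List A) (a : A) :
    Prop :=
  a = sharp ∨ op (wordOp op h) a ≠ wordOp op h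

/-- The `h`-contraction `c^h`: remove passive letters relative to the evolving
bounding set starting from `S ∘ h`. -/
noncomputable def contract {S A : Type} (op : Set S → A → Set S) (sharp : A) :
    List A → List A → List A
  | _, [] => []
  | h, a :: u =>
    if IsActive op sharp h a then a :: contract op sharp (h ++ [a]) u
    else contract op sharp h u
  termination_by h u => u.length

/-- contraction is idempotent: `c^h(c^h(u)) = c^h(u)`. -/
theorem stmt5 {S A : Type} (op : Set S → A → Set S) (sharp : A)
    (h u : List A) :
    contract op sharp h (contract op sharp h u) = contract op sharp h u := by
  induction u generalizing h with
  | nil => simp [contract]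
  | cons a u ih =>
    by_cases ha : IsActive op sharp h a
    · rw [show contract op sharp h (a :: u) = a :: contract op sharp (h ++ [a]) u from by
        rw [contract]; simp [ha]]
      rw [contract]; simp [ha, ih]
    · rw [show contract op sharp h (a :: u) = contract op sharp h u from by
        rw [contract]; simp [ha]]
      exact ih h
end

section
/- Expansion inverts contraction in distribution: if u is an infinite i.i.d. sequence of letters drawn from D_q, then for any history h, the word e_q^h(c^h(u)) is again an i.i.d. sequence distributed according to D_q^⊗ℕ. -/
open scoped Classical

open MeasureTheory

/-- The distribution `D_q` on `A ∪ {♯}`: mass `q` on the delimiter `♯`,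
mass `(1-q)·D(a)` on ordinary letters. -/
noncomputable def DqFun {A : Type} (D : A → ENNReal) (sharp : A) (q : ENNReal)
    (a : A) : ENNReal :=
  if a = sharp then q else (1 - q) * D a

/-- First `j` letters of an infinite word. -/
def seqPrefix {A : Type} (u : ℕ → A) (j : ℕ) : List A :=
  List.ofFn fun k : Fin j => u (k : ℕ)

/-- Position `j` of the infinite word `u` is active (for history `h` followed by
the prefix of `u`). -/
def SeqActiveAt {S A : Type} (op : Set S → A → Set S) (sharp : A) (h : List A)
    (u : ℕ → A) (j : ℕ) : Prop :=
  IsActive op sharp (h ++ seqPrefix u j) (u j)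

/-- `h`-contraction of an infinite word: the subsequence of its active letters. -/
noncomputable def contractSeq {S A : Type} (op : Set S → A → Set S) (sharp : A)
    (h : List A) (u : ℕ → A) (n : ℕ) : A :=
  u (Nat.nth (SeqActiveAt op sharp h u) n)

/-- State (current history, input pointer) of the expansion process, which reads
i.i.d. letters `r` and, at each micro-step, inserts the drawn letter if it is passive
and otherwise emits the next letter of the input `x`. -/
noncomputable def expState {S A : Type} (op : Set S → A → Set S) (sharp : A)
    (h0 : List A) (x r : ℕ → A) : ℕ → List A × ℕ
  | 0 => (h0, 0)
  | n + 1 =>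
    let s := expState op sharp h0 x r n
    if IsActive op sharp s.1 (r n) then (s.1 ++ [x s.2], s.2 + 1)
    else (s.1 ++ [r n], s.2)

/-- The `n`-th letter produced by the `(h,q)`-expansion of `x` driven by the
randomness source `r` (letters i.i.d. `D_q`): an inserted passive letter, or the
next input letter. -/
noncomputable def expandSeq {S A : Type} (op : Set S → A → Set S) (sharp : A)
    (h0 : List A) (x r : ℕ → A) (n : ℕ) : A :=
  let s := expState op sharp h0 x r n
  if IsActive op sharp s.1 (r n) then x s.2 else r n

open Finset Filter Topology
open scoped ENNReal

/-!
Fix the output prefix `a`. By induction on its length, uniformly in the history `h`, the two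
letter sequences and a set `G`, its probability on `G` is at most `c * ∏ D_q(a i)` whenever all
cylinder probabilities of `(U, R)` on `G` are at most `c` times their `D_q`-mass. If `a 0` is
passive it can only be an inserted letter `R 0 = a 0`, and what follows is the expansion after
`h a 0` driven by the shifted `R`. If `a 0` is active, `R 0` is active and `a 0` is the first
active letter `U n` of the input, preceded by `n` passive ones; summing over `n` gives
`D_q(Act) * ∑ₙ D_q(Inact)ⁿ = 1`. The first active letter exists almost surely because `♯` is
always active and has mass `q > 0`. Only subadditivity of `μ` is used, as nothing is assumed
measurable. Finally the upper bounds sum to `1` over all prefixes of a given length, so they are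
equalities.
-/

namespace Nat

theorem not_of_lt_nth_zero {p : ℕ → Prop} {i : ℕ} (hi : i < nth p 0) : ¬ p i :=
  notMem_of_lt_sInf (nth_zero (p := p) ▸ hi)

theorem nth_succ_of_infinite {p : ℕ → Prop} (hp : {i | p i}.Infinite) (j : ℕ) :
    nth p (j + 1) = nth (fun i => p (i + (nth p 0 + 1))) j + (nth p 0 + 1) := by
  classical
  set n := nth p 0
  have hshift : {i | p (i + (n + 1))}.Infinite := by
    refine frequently_atTop_iff_infinite.mp ?_
    have := frequently_atTop_iff_infinite.mpr hp
    rwa [← map_add_atTop_eq_nat (n + 1), frequently_map] at this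
  have hcount : count p (nth (fun i => p (i + (n + 1))) j + (n + 1)) = j + 1 := by
    rw [count_add', count_nth_of_infinite hshift, count_succ, count_nth_zero,
      if_pos (nth_mem_of_infinite hp 0)]
  rw [← hcount, nth_count (nth_mem_of_infinite hshift j)]

end Nat

theorem ENNReal.mul_tsum_geometric_of_add_eq_one {a b : ℝ≥0∞} (hab : a + b = 1) (ha : a ≠ 0) :
    a * ∑' n, b ^ n = 1 := by
  have hb : b ≠ ⊤ := ne_top_of_le_ne_top one_ne_top (hab ▸ le_add_self)
  have ha' : a ≠ ⊤ := ne_top_of_le_ne_top one_ne_top (hab ▸ le_self_add)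
  rw [tsum_geometric, ENNReal.sub_eq_of_eq_add hb hab.symm, ENNReal.mul_inv_cancel ha ha']

theorem MeasureTheory.measure_eq_of_forall_measure_le {Ω ι : Type*} [MeasurableSpace Ω]
    [Fintype ι] {μ : Measure Ω} [IsProbabilityMeasure μ] (X : Ω → ι) {p : ι → ℝ≥0∞}
    (hp : ∑ i, p i = 1) (hle : ∀ i, μ {ω | X ω = i} ≤ p i) (i : ι) :
    μ {ω | X ω = i} = p i := by
  classical
  have hrest : ∑ j ∈ univ.erase i, p j ≠ ⊤ :=
    ne_top_of_le_ne_top ENNReal.one_ne_top (hp ▸ sum_le_sum_of_subset (subset_univ _))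
  refine le_antisymm (hle i) (ENNReal.le_of_add_le_add_right hrest ?_)
  calc p i + ∑ j ∈ univ.erase i, p j = μ Set.univ := by
        rw [add_sum_erase _ _ (mem_univ i), hp, measure_univ]
    _ ≤ ∑ j, μ {ω | X ω = j} := (measure_mono fun ω _ => Set.mem_iUnion.mpr ⟨X ω, rfl⟩).trans
        (measure_iUnion_fintype_le μ _)
    _ = μ {ω | X ω = i} + ∑ j ∈ univ.erase i, μ {ω | X ω = j} :=
        (add_sum_erase _ _ (mem_univ i)).symm
    _ ≤ μ {ω | X ω = i} + ∑ j ∈ univ.erase i, p j := by gcongr with j; exact hle j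

section Words

variable {S A : Type} {op : Set S → A → Set S} {sharp : A}

theorem wordOp_append (h t : List A) : wordOp op (h ++ t) = t.foldl op (wordOp op h) := by
  simp [wordOp, List.foldl_append]

theorem wordOp_append_singleton (h : List A) (a : A) :
    wordOp op (h ++ [a]) = op (wordOp op h) a := by
  simp [wordOp_append]

theorem wordOp_append_congr {h₁ h₂ : List A} (he : wordOp op h₁ = wordOp op h₂) (t : List A) :
    wordOp op (h₁ ++ t) = wordOp op (h₂ ++ t) := by
  rw [wordOp_append, wordOp_append, he]

theorem isActive_congr {h₁ h₂ : List A} (he : wordOp op h₁ = wordOp op h₂) (a : A) :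
    IsActive op sharp h₁ a ↔ IsActive op sharp h₂ a := by
  rw [IsActive, IsActive, he]

theorem wordOp_append_singleton_of_not_isActive {h : List A} {a : A}
    (ha : ¬ IsActive op sharp h a) : wordOp op (h ++ [a]) = wordOp op h := by
  rw [wordOp_append_singleton]
  exact not_not.mp (not_or.mp ha).2

theorem seqPrefix_succ (u : ℕ → A) (n : ℕ) : seqPrefix u (n + 1) = seqPrefix u n ++ [u n] := by
  rw [seqPrefix, seqPrefix, List.ofFn_succ_last]
  simp

theorem seqPrefix_add (u : ℕ → A) (m n : ℕ) :
    seqPrefix u (m + n) = seqPrefix u m ++ seqPrefix (fun i => u (i + m)) n := by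
  simp [seqPrefix, List.ofFn_add, add_comm]

theorem wordOp_seqPrefix_of_forall_not_seqActiveAt {h : List A} {u : ℕ → A} {n : ℕ}
    (hn : ∀ i < n, ¬ SeqActiveAt op sharp h u i) :
    wordOp op (h ++ seqPrefix u n) = wordOp op h := by
  induction n with
  | zero => simp [seqPrefix]
  | succ n ih =>
    rw [seqPrefix_succ, ← List.append_assoc,
      wordOp_append_singleton_of_not_isActive (hn n n.lt_succ_self),
      ih fun i hi => hn i (hi.trans n.lt_succ_self)]

theorem seqActiveAt_iff_isActive {h : List A} {u : ℕ → A} {n : ℕ}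
    (hn : ∀ i < n, ¬ SeqActiveAt op sharp h u i) :
    SeqActiveAt op sharp h u n ↔ IsActive op sharp h (u n) :=
  isActive_congr (wordOp_seqPrefix_of_forall_not_seqActiveAt hn) (u n)

theorem not_isActive_of_lt_nth_zero {h : List A} {u : ℕ → A} {i : ℕ}
    (hi : i < Nat.nth (SeqActiveAt op sharp h u) 0) : ¬ IsActive op sharp h (u i) := by
  rw [← seqActiveAt_iff_isActive fun j hj => Nat.not_of_lt_nth_zero (hj.trans hi)]
  exact Nat.not_of_lt_nth_zero hi

theorem isActive_nth_zero {h : List A} {u : ℕ → A}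
    (hinf : {i | SeqActiveAt op sharp h u i}.Infinite) :
    IsActive op sharp h (u (Nat.nth (SeqActiveAt op sharp h u) 0)) :=
  (seqActiveAt_iff_isActive fun _ => Nat.not_of_lt_nth_zero).mp (Nat.nth_mem_of_infinite hinf 0)

theorem seqActiveAt_shift {h : List A} {u : ℕ → A} {n : ℕ}
    (hn : ∀ i < n, ¬ SeqActiveAt op sharp h u i) :
    SeqActiveAt op sharp (h ++ [u n]) (fun i => u (i + (n + 1)))
      = fun j => SeqActiveAt op sharp h u (j + (n + 1)) := by
  funext j
  have hpre : wordOp op (h ++ seqPrefix u (n + 1)) = wordOp op (h ++ [u n]) := by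
    rw [seqPrefix_succ, ← List.append_assoc, wordOp_append_singleton, wordOp_append_singleton,
      wordOp_seqPrefix_of_forall_not_seqActiveAt hn]
  refine propext (isActive_congr ?_ _)
  rw [add_comm j, seqPrefix_add, ← List.append_assoc]
  exact wordOp_append_congr hpre.symm _

theorem contractSeq_congr {h₁ h₂ : List A} (he : wordOp op h₁ = wordOp op h₂) (u : ℕ → A) :
    contractSeq op sharp h₁ u = contractSeq op sharp h₂ u := by
  have : SeqActiveAt op sharp h₁ u = SeqActiveAt op sharp h₂ u :=
    funext fun j => propext (isActive_congr (wordOp_append_congr he _) (u j))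
  unfold contractSeq
  rw [this]

theorem contractSeq_succ {h : List A} {u : ℕ → A}
    (hinf : {i | SeqActiveAt op sharp h u i}.Infinite) (j : ℕ) :
    contractSeq op sharp h u (j + 1)
      = contractSeq op sharp (h ++ [u (Nat.nth (SeqActiveAt op sharp h u) 0)])
          (fun i => u (i + (Nat.nth (SeqActiveAt op sharp h u) 0 + 1))) j := by
  unfold contractSeq
  rw [seqActiveAt_shift fun _ => Nat.not_of_lt_nth_zero, Nat.nth_succ_of_infinite hinf]

theorem expState_succ_of_isActive {h : List A} {x r : ℕ → A} (hr : IsActive op sharp h (r 0))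
    (i : ℕ) :
    expState op sharp h x r (i + 1)
      = ((expState op sharp (h ++ [x 0]) (fun j => x (j + 1)) (fun j => r (j + 1)) i).1,
         (expState op sharp (h ++ [x 0]) (fun j => x (j + 1)) (fun j => r (j + 1)) i).2 + 1) := by
  induction i with
  | zero => simp [expState, hr]
  | succ i ih =>
    rw [expState, ih, expState]
    split_ifs <;> rfl

theorem expState_succ_of_not_isActive {h : List A} {x r : ℕ → A}
    (hr : ¬ IsActive op sharp h (r 0)) (i : ℕ) :
    expState op sharp h x r (i + 1)
      = expState op sharp (h ++ [r 0]) x (fun j => r (j + 1)) i := by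
  induction i with
  | zero => simp [expState, hr]
  | succ i ih => rw [expState, ih, expState]

variable (op sharp) in
noncomputable abbrev expandContract (h : List A) (u r : ℕ → A) : ℕ → A :=
  expandSeq op sharp h (contractSeq op sharp h u) r

theorem expandContract_zero_of_isActive {h : List A} {u r : ℕ → A}
    (hr : IsActive op sharp h (r 0)) :
    expandContract op sharp h u r 0 = u (Nat.nth (SeqActiveAt op sharp h u) 0) := by
  simp [expandSeq, expState, hr, contractSeq]

theorem expandContract_zero_of_not_isActive {h : List A} {u r : ℕ → A}
    (hr : ¬ IsActive op sharp h (r 0)) : expandContract op sharp h u r 0 = r 0 := by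
  simp [expandSeq, expState, hr]

theorem expandContract_succ_of_isActive {h : List A} {u r : ℕ → A}
    (hinf : {i | SeqActiveAt op sharp h u i}.Infinite) (hr : IsActive op sharp h (r 0))
    (i : ℕ) :
    expandContract op sharp h u r (i + 1)
      = expandContract op sharp (h ++ [u (Nat.nth (SeqActiveAt op sharp h u) 0)])
          (fun j => u (j + (Nat.nth (SeqActiveAt op sharp h u) 0 + 1))) (fun j => r (j + 1)) i := by
  rw [expandContract, expandSeq, expState_succ_of_isActive hr]
  simp only [contractSeq_succ hinf]
  rfl

theorem expandContract_succ_of_not_isActive {h : List A} {u r : ℕ → A}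
    (hr : ¬ IsActive op sharp h (r 0)) (i : ℕ) :
    expandContract op sharp h u r (i + 1)
      = expandContract op sharp (h ++ [r 0]) u (fun j => r (j + 1)) i := by
  rw [expandContract, expandContract,
    contractSeq_congr (wordOp_append_singleton_of_not_isActive hr) u, expandSeq, expandSeq,
    expState_succ_of_not_isActive hr]

theorem isActive_and_nth_eq_of_expandContract_zero_eq {h : List A} {u r : ℕ → A} {a : A}
    (ha : IsActive op sharp h a) (h0 : expandContract op sharp h u r 0 = a) :
    IsActive op sharp h (r 0) ∧ u (Nat.nth (SeqActiveAt op sharp h u) 0) = a := by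
  by_cases hr : IsActive op sharp h (r 0)
  · exact ⟨hr, by rwa [expandContract_zero_of_isActive hr] at h0⟩
  · rw [expandContract_zero_of_not_isActive hr] at h0
    exact absurd (h0 ▸ ha) hr

theorem not_isActive_and_eq_of_expandContract_zero_eq {h : List A} {u r : ℕ → A} {a : A}
    (hinf : {i | SeqActiveAt op sharp h u i}.Infinite) (ha : ¬ IsActive op sharp h a)
    (h0 : expandContract op sharp h u r 0 = a) : ¬ IsActive op sharp h (r 0) ∧ r 0 = a := by
  by_cases hr : IsActive op sharp h (r 0)
  · rw [expandContract_zero_of_isActive hr] at h0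
    exact absurd (h0 ▸ isActive_nth_zero hinf) ha
  · exact ⟨hr, by rwa [expandContract_zero_of_not_isActive hr] at h0⟩

end Words

section Cylinder

variable {Ω A : Type}

def cylinderSet (X : ℕ → Ω → A) (N : ℕ) (T : ℕ → Finset A) : Set Ω :=
  {ω | ∀ i < N, X i ω ∈ T i}

noncomputable def cylinderMass (P : A → ℝ≥0∞) (N : ℕ) (T : ℕ → Finset A) : ℝ≥0∞ :=
  ∏ i ∈ range N, ∑ x ∈ T i, P x

def patternAppend (m : ℕ) (T₀ T : ℕ → Finset A) (i : ℕ) : Finset A :=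
  if i < m then T₀ i else T (i - m)

@[simp]
theorem cylinderSet_zero (X : ℕ → Ω → A) (T : ℕ → Finset A) : cylinderSet X 0 T = Set.univ := by
  simp [cylinderSet]

@[simp]
theorem cylinderSet_univ [Fintype A] (X : ℕ → Ω → A) (N : ℕ) :
    cylinderSet X N (fun _ => univ) = Set.univ := by
  simp [cylinderSet]

theorem cylinderSet_append (X : ℕ → Ω → A) (m N : ℕ) (T₀ T : ℕ → Finset A) :
    cylinderSet X (m + N) (patternAppend m T₀ T)
      = cylinderSet X m T₀ ∩ cylinderSet (fun i => X (i + m)) N T := by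
  ext ω
  simp only [cylinderSet, patternAppend, Set.mem_ofPred_eq, Set.mem_inter_iff]
  refine ⟨fun hω => ⟨fun i hi => ?_, fun i hi => ?_⟩, fun ⟨h₀, h₁⟩ i hi => ?_⟩
  · simpa [hi] using hω i (by omega)
  · simpa using hω (i + m) (by omega)
  · split_ifs with him
    · exact h₀ i him
    · simpa [Nat.sub_add_cancel (not_lt.mp him)] using h₁ (i - m) (by omega)

@[simp]
theorem cylinderMass_zero (P : A → ℝ≥0∞) (T : ℕ → Finset A) : cylinderMass P 0 T = 1 := by
  simp [cylinderMass]

theorem cylinderMass_const (P : A → ℝ≥0∞) (N : ℕ) (T : Finset A) :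
    cylinderMass P N (fun _ => T) = (∑ x ∈ T, P x) ^ N := by
  simp [cylinderMass]

theorem cylinderMass_univ [Fintype A] {P : A → ℝ≥0∞} (hP : ∑ x, P x = 1) (N : ℕ) :
    cylinderMass P N (fun _ => univ) = 1 := by
  simp [cylinderMass_const, hP]

theorem cylinderMass_append (P : A → ℝ≥0∞) (m N : ℕ) (T₀ T : ℕ → Finset A) :
    cylinderMass P (m + N) (patternAppend m T₀ T)
      = cylinderMass P m T₀ * cylinderMass P N T := by
  rw [cylinderMass, prod_range_add]
  congr 1
  · exact prod_congr rfl fun i hi => by simp [patternAppend, mem_range.mp hi]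
  · exact prod_congr rfl fun i _ => by simp [patternAppend]

theorem cylinderMass_ne_top [Fintype A] {P : A → ℝ≥0∞} (hP : ∑ x, P x = 1) (N : ℕ)
    (T : ℕ → Finset A) : cylinderMass P N T ≠ ⊤ :=
  ne_top_of_le_ne_top ENNReal.one_ne_top
    (prod_le_one' fun _ _ => hP ▸ sum_le_sum_of_subset (subset_univ _))

def CylinderBound [MeasurableSpace Ω] (μ : Measure Ω) (P : A → ℝ≥0∞) (U R : ℕ → Ω → A)
    (G : Set Ω) (c : ℝ≥0∞) : Prop :=
  ∀ (NU NR : ℕ) (TU TR : ℕ → Finset A),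
    μ (cylinderSet U NU TU ∩ cylinderSet R NR TR ∩ G)
      ≤ c * (cylinderMass P NU TU * cylinderMass P NR TR)

variable [MeasurableSpace Ω] {μ : Measure Ω} {P : A → ℝ≥0∞} {U R : ℕ → Ω → A} {G : Set Ω}
  {c : ℝ≥0∞}

theorem measure_cylinderSet_inter_le [Fintype A]
    (hiid : ∀ (k : ℕ) (a b : Fin k → A), μ {ω | ∀ i : Fin k, U i ω = a i ∧ R i ω = b i}
      ≤ (∏ i, P (a i)) * ∏ i, P (b i)) (N : ℕ) (TU TR : ℕ → Finset A) :
    μ (cylinderSet U N TU ∩ cylinderSet R N TR) ≤ cylinderMass P N TU * cylinderMass P N TR := by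
  classical
  set T := Fintype.piFinset (fun i : Fin N => TU i) ×ˢ Fintype.piFinset (fun i : Fin N => TR i)
  have hcover : cylinderSet U N TU ∩ cylinderSet R N TR
      ⊆ ⋃ ab ∈ T, {ω | ∀ i : Fin N, U i ω = ab.1 i ∧ R i ω = ab.2 i} := fun ω hω =>
    Set.mem_biUnion (x := (fun i : Fin N => U i ω, fun i : Fin N => R i ω))
      (mem_product.mpr ⟨Fintype.mem_piFinset.mpr fun i => hω.1 i i.isLt,
        Fintype.mem_piFinset.mpr fun i => hω.2 i i.isLt⟩) fun _ => ⟨rfl, rfl⟩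
  calc _ ≤ ∑ ab ∈ T, μ {ω | ∀ i : Fin N, U i ω = ab.1 i ∧ R i ω = ab.2 i} :=
        (measure_mono hcover).trans (measure_biUnion_finset_le T _)
    _ ≤ ∑ ab ∈ T, (∏ i, P (ab.1 i)) * ∏ i, P (ab.2 i) := sum_le_sum fun ab _ => hiid N ab.1 ab.2
    _ = _ := by
      rw [sum_product]
      dsimp only
      rw [← sum_mul_sum, ← prod_univ_sum, ← prod_univ_sum, cylinderMass, cylinderMass,
        Fin.prod_univ_eq_prod_range (fun i => ∑ x ∈ TU i, P x),
        Fin.prod_univ_eq_prod_range (fun i => ∑ x ∈ TR i, P x)]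

theorem cylinderBound_of_iid [Fintype A] (hP : ∑ x, P x = 1)
    (hiid : ∀ (k : ℕ) (a b : Fin k → A), μ {ω | ∀ i : Fin k, U i ω = a i ∧ R i ω = b i}
      ≤ (∏ i, P (a i)) * ∏ i, P (b i)) :
    CylinderBound μ P U R Set.univ 1 := by
  intro NU NR TU TR
  have hU := cylinderSet_append U NU NR TU (fun _ => univ)
  have hR := cylinderSet_append R NR NU TR (fun _ => univ)
  have hmU := cylinderMass_append P NU NR TU (fun _ => univ)
  have hmR := cylinderMass_append P NR NU TR (fun _ => univ)
  rw [cylinderSet_univ, Set.inter_univ] at hU hR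
  rw [cylinderMass_univ hP, mul_one] at hmU hmR
  rw [Set.inter_univ, one_mul, ← hU, ← hR, ← hmU, ← hmR, add_comm NR]
  exact measure_cylinderSet_inter_le hiid _ _ _

theorem CylinderBound.shift (hB : CylinderBound μ P U R G c) (m l : ℕ)
    (TU₀ TR₀ : ℕ → Finset A) :
    CylinderBound μ P (fun i => U (i + m)) (fun i => R (i + l))
      (G ∩ (cylinderSet U m TU₀ ∩ cylinderSet R l TR₀))
      (c * (cylinderMass P m TU₀ * cylinderMass P l TR₀)) := by
  intro NU NR TU TR
  have h := hB (m + NU) (l + NR) (patternAppend m TU₀ TU) (patternAppend l TR₀ TR)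
  rw [cylinderSet_append, cylinderSet_append, cylinderMass_append, cylinderMass_append] at h
  calc _ = μ (cylinderSet U m TU₀ ∩ cylinderSet (fun i => U (i + m)) NU TU ∩
        (cylinderSet R l TR₀ ∩ cylinderSet (fun i => R (i + l)) NR TR) ∩ G) := by
        congr 1
        ext ω
        simp only [Set.mem_inter_iff]
        tauto
    _ ≤ _ := h
    _ = _ := by ring

theorem CylinderBound.measure_eventually_ne_eq_zero [Fintype A] (hB : CylinderBound μ P U R G c)
    (hc : c ≠ ⊤) (hP : ∑ x, P x = 1) {s : A} (hs : P s ≠ 0) (N : ℕ) :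
    μ ({ω | ∀ j ≥ N, U j ω ≠ s} ∩ G) = 0 := by
  classical
  set ρ := ∑ x ∈ univ.erase s, P x
  have hρ : ρ < 1 := by
    rw [← hP, ← add_sum_erase _ _ (mem_univ s), add_comm]
    exact ENNReal.lt_add_right (ne_top_of_le_ne_top ENNReal.one_ne_top
      (hP ▸ sum_le_sum_of_subset (subset_univ _))) hs
  have hle : ∀ L, μ ({ω | ∀ j ≥ N, U j ω ≠ s} ∩ G) ≤ c * ρ ^ L := fun L => by
    have h := hB (N + L) 0 (patternAppend N (fun _ => univ) (fun _ => univ.erase s))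
      (fun _ => univ)
    rw [cylinderSet_append, cylinderMass_append, cylinderMass_univ hP, cylinderMass_const,
      cylinderSet_zero, cylinderSet_univ, cylinderMass_zero, Set.univ_inter, Set.inter_univ,
      one_mul, mul_one] at h
    refine le_trans (measure_mono ?_) h
    rintro ω ⟨hω, hG⟩
    refine ⟨fun i _ => ?_, hG⟩
    simpa using hω (i + N) (by omega)
  have htend : Tendsto (fun L => c * ρ ^ L) atTop (𝓝 0) := by
    simpa using ENNReal.Tendsto.const_mul (ENNReal.tendsto_pow_atTop_nhds_zero_of_lt_one hρ)
      (Or.inr hc)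
  exact le_antisymm (ge_of_tendsto' htend hle) bot_le

end Cylinder

section Expansion

variable {S A Ω : Type} [Fintype A] {op : Set S → A → Set S} {sharp : A} {h : List A}
  {U R : ℕ → Ω → A} {G : Set Ω}

theorem expandContract_event_subset_of_isActive {k : ℕ} {a : Fin (k + 1) → A}
    (ha : IsActive op sharp h (a 0)) :
    {ω | ∀ i : Fin (k + 1), expandContract op sharp h (U · ω) (R · ω) i = a i} ∩ G
      ⊆ ({ω | {i | SeqActiveAt op sharp h (U · ω) i}.Finite} ∩ G) ∪ ⋃ n : ℕ,
        {ω | ∀ i : Fin k, expandContract op sharp (h ++ [a 0]) (fun j => U (j + (n + 1)) ω)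
          (fun j => R (j + 1) ω) i = a i.succ} ∩
        (G ∩ (cylinderSet U (n + 1) (patternAppend n
            (fun _ => univ.filter (¬ IsActive op sharp h ·)) (fun _ => {a 0})) ∩
          cylinderSet R 1 (fun _ => univ.filter (IsActive op sharp h)))) := by
  rintro ω ⟨hω, hG⟩
  rcases Set.finite_or_infinite {i | SeqActiveAt op sharp h (U · ω) i} with hfin | hinf
  · exact Or.inl ⟨hfin, hG⟩
  obtain ⟨hr, hUn⟩ := isActive_and_nth_eq_of_expandContract_zero_eq ha (hω 0)
  refine Or.inr (Set.mem_iUnion.mpr ⟨Nat.nth (SeqActiveAt op sharp h (U · ω)) 0,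
    fun i => ?_, hG, fun i hi => ?_, fun i hi => ?_⟩)
  · simpa [expandContract_succ_of_isActive (r := (R · ω)) hinf hr, hUn] using hω i.succ
  · rcases Nat.lt_succ_iff_lt_or_eq.mp hi with hi | rfl
    · simpa [patternAppend, hi] using not_isActive_of_lt_nth_zero hi
    · simpa [patternAppend] using hUn
  · simpa [show i = 0 by omega] using hr

-- The shift `j + 0` and the empty `U`-pattern match the shape of `CylinderBound.shift 0 1`.
theorem expandContract_event_subset_of_not_isActive {k : ℕ} {a : Fin (k + 1) → A}
    (ha : ¬ IsActive op sharp h (a 0)) :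
    {ω | ∀ i : Fin (k + 1), expandContract op sharp h (U · ω) (R · ω) i = a i} ∩ G
      ⊆ ({ω | {i | SeqActiveAt op sharp h (U · ω) i}.Finite} ∩ G) ∪
        {ω | ∀ i : Fin k, expandContract op sharp (h ++ [a 0]) (fun j => U (j + 0) ω)
          (fun j => R (j + 1) ω) i = a i.succ} ∩
        (G ∩ (cylinderSet U 0 (fun _ => univ) ∩ cylinderSet R 1 (fun _ => {a 0}))) := by
  rintro ω ⟨hω, hG⟩
  rcases Set.finite_or_infinite {i | SeqActiveAt op sharp h (U · ω) i} with hfin | hinf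
  · exact Or.inl ⟨hfin, hG⟩
  obtain ⟨hr, hR⟩ := not_isActive_and_eq_of_expandContract_zero_eq hinf ha (hω 0)
  refine Or.inr ⟨fun i => ?_, hG, by simp, fun i hi => ?_⟩
  · simpa [expandContract_succ_of_not_isActive (u := (U · ω)) (r := (R · ω)) hr, hR]
      using hω i.succ
  · simpa [show i = 0 by omega] using hR

variable [MeasurableSpace Ω] {μ : Measure Ω} {P : A → ℝ≥0∞} {c : ℝ≥0∞}

theorem CylinderBound.measure_finite_seqActiveAt_eq_zero (hB : CylinderBound μ P U R G c)
    (hc : c ≠ ⊤) (hP : ∑ x, P x = 1) (hs : P sharp ≠ 0) :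
    μ ({ω | {i | SeqActiveAt op sharp h (U · ω) i}.Finite} ∩ G) = 0 := by
  refine measure_mono_null (fun ω ⟨hfin, hG⟩ => ?_)
    (measure_iUnion_null fun N => hB.measure_eventually_ne_eq_zero hc hP hs N)
  obtain ⟨b, hb⟩ := hfin.bddAbove
  refine Set.mem_iUnion.mpr ⟨b + 1, fun j hj hsharp => ?_, hG⟩
  have : j ≤ b := hb (show SeqActiveAt op sharp h (U · ω) j from Or.inl hsharp)
  omega

variable (op sharp) in
def ExpandContractBound (μ : Measure Ω) (P : A → ℝ≥0∞) (k : ℕ) : Prop :=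
  ∀ (h : List A) (U R : ℕ → Ω → A) (G : Set Ω) (c : ℝ≥0∞), c ≠ ⊤ → CylinderBound μ P U R G c →
    ∀ a : Fin k → A,
      μ ({ω | ∀ i : Fin k, expandContract op sharp h (U · ω) (R · ω) i = a i} ∩ G)
        ≤ c * ∏ i, P (a i)

theorem measure_expandContract_le_of_isActive {k : ℕ} (ih : ExpandContractBound op sharp μ P k)
    (hP : ∑ x, P x = 1) (hs : P sharp ≠ 0) (hc : c ≠ ⊤) (hB : CylinderBound μ P U R G c)
    {a : Fin (k + 1) → A} (ha : IsActive op sharp h (a 0)) :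
    μ ({ω | ∀ i : Fin (k + 1), expandContract op sharp h (U · ω) (R · ω) i = a i} ∩ G)
      ≤ c * ∏ i, P (a i) := by
  set mA := ∑ x ∈ univ.filter (IsActive op sharp h), P x
  set mP := ∑ x ∈ univ.filter (¬ IsActive op sharp h ·), P x
  have hsplit : mA + mP = 1 := by rw [sum_filter_add_sum_filter_not, hP]
  have hmA : mA ≠ 0 :=
    ne_bot_of_le_ne_bot hs (single_le_sum (fun _ _ => bot_le) (by simp [IsActive]))
  calc _ ≤ 0 + ∑' n : ℕ, c * (mP ^ n * P (a 0) * mA) * ∏ i : Fin k, P (a i.succ) := by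
        rw [← hB.measure_finite_seqActiveAt_eq_zero hc hP hs]
        refine (measure_mono (expandContract_event_subset_of_isActive ha)).trans
          ((measure_union_le _ _).trans (add_le_add le_rfl
            ((measure_iUnion_le _).trans (ENNReal.tsum_le_tsum fun n => ?_))))
        have hmass : cylinderMass P (n + 1) (patternAppend n
              (fun _ => univ.filter (¬ IsActive op sharp h ·)) (fun _ => {a 0}))
            * cylinderMass P 1 (fun _ => univ.filter (IsActive op sharp h))
            = mP ^ n * P (a 0) * mA := by
          simp [cylinderMass_append, cylinderMass_const, mA, mP]
        rw [← hmass]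
        exact ih _ _ _ _ _ (ENNReal.mul_ne_top hc (ENNReal.mul_ne_top
          (cylinderMass_ne_top hP _ _) (cylinderMass_ne_top hP _ _))) (hB.shift (n + 1) 1 _ _) _
    _ = c * P (a 0) * (∏ i : Fin k, P (a i.succ)) * (mA * ∑' n, mP ^ n) := by
        rw [zero_add, ← ENNReal.tsum_mul_left, ← ENNReal.tsum_mul_left]
        exact tsum_congr fun n => by ring
    _ = c * ∏ i, P (a i) := by
        rw [ENNReal.mul_tsum_geometric_of_add_eq_one hsplit hmA, mul_one, Fin.prod_univ_succ,
          mul_assoc]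

theorem measure_expandContract_le_of_not_isActive {k : ℕ}
    (ih : ExpandContractBound op sharp μ P k) (hP : ∑ x, P x = 1) (hs : P sharp ≠ 0)
    (hc : c ≠ ⊤) (hB : CylinderBound μ P U R G c) {a : Fin (k + 1) → A}
    (ha : ¬ IsActive op sharp h (a 0)) :
    μ ({ω | ∀ i : Fin (k + 1), expandContract op sharp h (U · ω) (R · ω) i = a i} ∩ G)
      ≤ c * ∏ i, P (a i) := by
  calc _ ≤ 0 + c * (cylinderMass P 0 (fun _ => univ) * cylinderMass P 1 (fun _ => {a 0}))
          * ∏ i : Fin k, P (a i.succ) := by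
        rw [← hB.measure_finite_seqActiveAt_eq_zero hc hP hs]
        refine (measure_mono (expandContract_event_subset_of_not_isActive ha)).trans
          ((measure_union_le _ _).trans (add_le_add le_rfl ?_))
        exact ih _ _ _ _ _ (ENNReal.mul_ne_top hc (ENNReal.mul_ne_top
          (cylinderMass_ne_top hP _ _) (cylinderMass_ne_top hP _ _))) (hB.shift 0 1 _ _) _
    _ = c * ∏ i, P (a i) := by
        simp [cylinderMass_const, Fin.prod_univ_succ, mul_assoc]

variable (op sharp) in
theorem expandContractBound (hP : ∑ x, P x = 1) (hs : P sharp ≠ 0) :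
    ∀ k, ExpandContractBound op sharp μ P k
  | 0 => fun _ _ _ _ _ _ hB _ => by simpa using hB 0 0 (fun _ => ∅) (fun _ => ∅)
  | k + 1 => fun h _ _ _ _ hc hB a => by
    by_cases ha : IsActive op sharp h (a 0)
    · exact measure_expandContract_le_of_isActive (expandContractBound hP hs k) hP hs hc hB ha
    · exact measure_expandContract_le_of_not_isActive (expandContractBound hP hs k) hP hs hc hB
        ha

end Expansion

theorem sum_dqFun {A : Type} [Fintype A] {D : A → ℝ≥0∞} {sharp : A} (hD : D sharp = 0)
    (hDsum : ∑ a, D a = 1) {q : ℝ≥0∞} (hq : q ≤ 1) : ∑ a, DqFun D sharp q a = 1 := by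
  classical
  have hletter : ∀ a ∈ univ.erase sharp, DqFun D sharp q a = (1 - q) * D a :=
    fun a ha => if_neg (ne_of_mem_erase ha)
  rw [← add_sum_erase _ _ (mem_univ sharp), sum_congr rfl hletter, ← mul_sum, sum_erase _ hD,
    hDsum, mul_one, DqFun, if_pos rfl, add_tsub_cancel_of_le hq]

/-- expansion inverts contraction in distribution: if `U` is an i.i.d.
`D_q`-sequence (and the expansion is driven by an independent i.i.d. `D_q`-source `R`),
then `e_q^h(c^h(U))` is again i.i.d. `D_q^⊗ℕ`. -/
theorem stmt8 {S A : Type} [Fintype A] (op : Set S → A → Set S) (sharp : A)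
    (D : A → ENNReal) (hDsharp : D sharp = 0) (hDsum : ∑ a, D a = 1)
    (q : ENNReal) (hq0 : 0 < q) (hq1 : q ≤ 1) (h : List A)
    {Ω : Type} [MeasurableSpace Ω] (μ : Measure Ω) [IsProbabilityMeasure μ]
    (U R : ℕ → Ω → A)
    (hiid : ∀ (k : ℕ) (a b : Fin k → A),
      μ {ω | ∀ i : Fin k, U (i : ℕ) ω = a i ∧ R (i : ℕ) ω = b i}
        = (∏ i, DqFun D sharp q (a i)) * ∏ i, DqFun D sharp q (b i)) :
    ∀ (k : ℕ) (a : Fin k → A),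
      μ {ω | ∀ i : Fin k,
          expandSeq op sharp h
            (contractSeq op sharp h (fun m => U m ω)) (fun m => R m ω) (i : ℕ) = a i}
        = ∏ i, DqFun D sharp q (a i) := by
  
  intro k a
  have hP := sum_dqFun hDsharp hDsum hq1
  have hs : DqFun D sharp q sharp ≠ 0 := by simpa [DqFun] using hq0.ne'
  have hB := cylinderBound_of_iid hP fun k a b => (hiid k a b).le
  have hle : ∀ a : Fin k → A,
      μ {ω | ∀ i : Fin k, expandContract op sharp h (U · ω) (R · ω) i = a i}
        ≤ ∏ i, DqFun D sharp q (a i) := fun a => by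
    simpa using expandContractBound op sharp hP hs k h U R _ _ ENNReal.one_ne_top hB a
  have hprod : ∑ a : Fin k → A, ∏ i, DqFun D sharp q (a i) = 1 := by
    rw [← Fintype.sum_pow, hP, one_pow]
  simpa [funext_iff] using measure_eq_of_forall_measure_le (μ := μ)
    (fun ω (i : Fin k) => expandContract op sharp h (U · ω) (R · ω) i) hprod
    (fun a => by simpa [funext_iff] using hle a) a
end

section
/- Consider the birth-and-death chain on {0,...,n} with transition probabilities p_{i,i+1} = (n−i)/(n−i+iλ) and p_{i+1,i} = (i+1)λ/(n−i−1+(i+1)λ). Its stationary distribution π satisfies π(i) = (C(n−1,i−1)λ^{−(i−1)} + C(n−1,i)λ^{−i})·π(0) for all i ∈ {0,...,n}, and consequently π(0) ≥ (1/2)(1+1/λ)^{−n} whenever λ ≥ n. -/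
/-!
Write `D i = n - i + i λ`, the denominator of `p_{i,i+1}`; the denominator of `p_{i+1,i}` is then
`D (i+1)`, so detailed balance says that `q i = π i / D i` satisfies
`q (i+1) (i+1) = q i (n - i) λ⁻¹`, whence `q i = C(n,i) λ⁻ⁱ q 0`. Pascal's rule turns
`C(n,i) λ⁻ⁱ D i / n` into the two-term weight of the statement, and both terms sum to
`(1 + λ⁻¹)^(n-1)` by the binomial theorem, so `π 0 = (1 + λ⁻¹)^(1-n) / 2`.
-/

open Finset

theorem eq_choose_mul_pow_of_succ_mul_eq {R : Type*} [CommRing R] [IsDomain R] [CharZero R]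
    {n : ℕ} {x : R} {q : ℕ → R} (h : ∀ i < n, q (i + 1) * (i + 1) = q i * (n - i) * x) :
    ∀ i ≤ n, q i = n.choose i * x ^ i * q 0 := by
  intro i hi
  induction i with
  | zero => simp
  | succ i ih =>
    have hin : i < n := hi
    have hchoose : (n.choose (i + 1) : R) * (i + 1) = n.choose i * (n - i) := by
      have := congrArg (Nat.cast (R := R)) (Nat.choose_succ_right_eq n i)
      push_cast [Nat.cast_sub hin.le] at this
      exact this
    apply mul_right_cancel₀ (Nat.cast_add_one_ne_zero i : (i : R) + 1 ≠ 0)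
    rw [h i hin, ih hin.le]
    linear_combination (-(x ^ (i + 1) * q 0)) * hchoose

-- `π i / π 0` for the chain on `{0, …, m + 1}`.
noncomputable def starWeight (m : ℕ) (lam : ℝ) (i : ℕ) : ℝ :=
  (if i = 0 then 0 else (m.choose (i - 1) : ℝ) * lam ^ (1 - (i : ℤ)))
    + (m.choose i : ℝ) * lam ^ (-(i : ℤ))

theorem starWeight_zero (m : ℕ) (lam : ℝ) : starWeight m lam 0 = 1 := by
  simp [starWeight]

theorem starWeight_succ (m : ℕ) (lam : ℝ) (j : ℕ) :
    starWeight m lam (j + 1) = m.choose j * lam⁻¹ ^ j + m.choose (j + 1) * lam⁻¹ ^ (j + 1) := by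
  have hshift : (1 - ((j + 1 : ℕ) : ℤ)) = -(j : ℤ) := by push_cast; ring
  simp only [starWeight, if_neg (Nat.succ_ne_zero j), Nat.add_sub_cancel, hshift, zpow_neg,
    zpow_natCast, inv_pow]

theorem starWeight_mul_eq {m : ℕ} {lam : ℝ} (hlam : lam ≠ 0) {i : ℕ} (hi : i ≤ m + 1) :
    starWeight m lam i * (m + 1) = (m + 1).choose i * lam⁻¹ ^ i * ((m + 1 : ℝ) - i + i * lam) := by
  cases i with
  | zero => simp [starWeight_zero]
  | succ j =>
    have hjm : j ≤ m := Nat.le_of_succ_le_succ hi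
    have hlow : ((m + 1).choose (j + 1) : ℝ) * (j + 1) = (m + 1) * m.choose j := by
      exact_mod_cast (Nat.add_one_mul_choose_eq m j).symm
    have hhigh : ((m + 1).choose (j + 1) : ℝ) * (m - j) = (m + 1) * m.choose (j + 1) := by
      have := congrArg (Nat.cast (R := ℝ)) (Nat.choose_mul_succ_eq m (j + 1))
      push_cast [Nat.cast_sub hjm] at this
      linear_combination -this
    have hinv : lam⁻¹ * lam = 1 := inv_mul_cancel₀ hlam
    rw [starWeight_succ]
    push_cast
    linear_combination (-lam⁻¹ ^ (j + 1)) * hhigh - lam⁻¹ ^ (j + 1) * lam * hlow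
      - (m.choose j : ℝ) * lam⁻¹ ^ j * (m + 1) * hinv

theorem sum_starWeight (m : ℕ) (lam : ℝ) :
    ∑ i ∈ range (m + 2), starWeight m lam i = 2 * (1 + lam⁻¹) ^ m := by
  have binom : ∑ i ∈ range (m + 1), (m.choose i : ℝ) * lam⁻¹ ^ i = (1 + lam⁻¹) ^ m := by
    rw [add_comm (1 : ℝ), add_pow]
    exact sum_congr rfl fun i _ => by ring
  have shifted :
      ∑ j ∈ range (m + 1), (m.choose (j + 1) : ℝ) * lam⁻¹ ^ (j + 1) + 1 = (1 + lam⁻¹) ^ m := by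
    rw [sum_range_succ, Nat.choose_succ_self, ← binom, sum_range_succ' _ m]
    simp
  rw [sum_range_succ', starWeight_zero]
  simp only [starWeight_succ, sum_add_distrib]
  rw [binom, add_assoc, shifted]
  ring

theorem eq_starWeight_mul_of_detailed_balance {n : ℕ} (hn : 1 ≤ n) {lam : ℝ} (hlam : 0 < lam)
    {π : ℕ → ℝ}
    (hdb : ∀ i < n,
      π i * (((n : ℝ) - i) / ((n : ℝ) - i + i * lam))
        = π (i + 1) * ((((i : ℝ) + 1) * lam) / ((n : ℝ) - i - 1 + ((i : ℝ) + 1) * lam))) :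
    ∀ i ≤ n, π i = starWeight (n - 1) lam i * π 0 := by
  set D : ℕ → ℝ := fun i => n - i + i * lam with hD
  clear_value D
  have hDpos : ∀ i ≤ n, 0 < D i := by
    intro i hi
    rcases Nat.eq_zero_or_pos i with rfl | hi0
    · simp [hD]; omega
    · have : (i : ℝ) ≤ n := by exact_mod_cast hi
      have : (0 : ℝ) < i * lam := by positivity
      simp only [hD]; linarith
  have hq : ∀ i ≤ n, π i / D i = n.choose i * lam⁻¹ ^ i * (π 0 / D 0) := by
    refine eq_choose_mul_pow_of_succ_mul_eq fun i hi => ?_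
    have hDsucc : (n : ℝ) - i - 1 + ((i : ℝ) + 1) * lam = D (i + 1) := by
      simp only [hD]; push_cast; ring
    have hDi : (n : ℝ) - i + i * lam = D i := by simp [hD]
    have hstep := hdb i hi
    rw [hDi, hDsucc, mul_div_assoc', mul_div_assoc', mul_div_right_comm,
      mul_div_right_comm (π (i + 1))] at hstep
    rw [hstep]
    field_simp
  obtain ⟨m, rfl⟩ : ∃ m, n = m + 1 := ⟨n - 1, by omega⟩
  intro i hi
  have hD0 : D 0 = m + 1 := by simp [hD]
  have hw : starWeight m lam i * (m + 1) = (m + 1).choose i * lam⁻¹ ^ i * D i := by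
    rw [starWeight_mul_eq hlam.ne' hi]; simp [hD]
  rw [Nat.add_sub_cancel, ← div_mul_cancel₀ (π i) (hDpos i hi).ne', hq i hi, hD0]
  field_simp
  linear_combination (-π 0) * hw

theorem stmt16_general (n : ℕ) (hn : 1 ≤ n) (lam : ℝ) (hlam : (n : ℝ) ≤ lam)
    (π : ℕ → ℝ)
    (hsum : ∑ i ∈ Finset.range (n + 1), π i = 1)
    (hdb : ∀ i < n,
      π i * (((n : ℝ) - i) / ((n : ℝ) - i + i * lam))
        = π (i + 1) * ((((i : ℝ) + 1) * lam) / ((n : ℝ) - i - 1 + ((i : ℝ) + 1) * lam))) :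
    (∀ i ≤ n,
      π i = ((if i = 0 then 0 else ((n - 1).choose (i - 1) : ℝ) * lam ^ (1 - (i : ℤ)))
              + ((n - 1).choose i : ℝ) * lam ^ (-(i : ℤ))) * π 0) ∧
    (1 / 2 : ℝ) * (1 + 1 / lam) ^ (-(n : ℤ)) ≤ π 0 := by
  have hlam0 : 0 < lam := by linarith [(by exact_mod_cast hn : (1 : ℝ) ≤ n)]
  have hπ := eq_starWeight_mul_of_detailed_balance hn hlam0 hdb
  refine ⟨hπ, ?_⟩
  obtain ⟨m, rfl⟩ : ∃ m, n = m + 1 := ⟨n - 1, by omega⟩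
  have hnorm : 2 * (1 + lam⁻¹) ^ m * π 0 = 1 := by
    rw [← sum_starWeight, sum_mul, ← hsum]
    exact sum_congr rfl fun i hi => (hπ i (mem_range_succ_iff.mp hi)).symm
  have hbase : 1 ≤ 1 + lam⁻¹ := le_add_of_nonneg_right (inv_nonneg.mpr hlam0.le)
  calc (1 / 2 : ℝ) * (1 + 1 / lam) ^ (-((m + 1 : ℕ) : ℤ))
      ≤ 1 / 2 * (1 + lam⁻¹) ^ (-(m : ℤ)) := by
        rw [one_div lam]
        gcongr
        exact m.le_succ
    _ = (2 * (1 + lam⁻¹) ^ m)⁻¹ := by rw [zpow_neg, zpow_natCast, mul_inv, one_div]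
    _ = π 0 := (eq_inv_of_mul_eq_one_right hnorm).symm

/-- for the birth-and-death chain on `{0, ..., n}` with
`p_{i,i+1} = (n−i)/(n−i+iλ)` and `p_{i+1,i} = (i+1)λ/(n−i−1+(i+1)λ)`, the stationary
distribution (characterized by detailed balance and normalization) satisfies
`π(i) = (C(n−1,i−1)·λ^{−(i−1)} + C(n−1,i)·λ^{−i})·π(0)` (with `C(n−1,−1) = 0`),
and consequently `π(0) ≥ (1/2)·(1+1/λ)^{−n}` when `λ ≥ n`. -/
theorem stmt16 (n : ℕ) (hn : 1 ≤ n) (lam : ℝ) (hlam : (n : ℝ) ≤ lam)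
    (π : ℕ → ℝ) (hpos : ∀ i, 0 ≤ π i)
    (hsum : ∑ i ∈ Finset.range (n + 1), π i = 1)
    (hdb : ∀ i < n,
      π i * (((n : ℝ) - i) / ((n : ℝ) - i + i * lam))
        = π (i + 1) * ((((i : ℝ) + 1) * lam) / ((n : ℝ) - i - 1 + ((i : ℝ) + 1) * lam))) :
    (∀ i ≤ n,
      π i = ((if i = 0 then 0 else ((n - 1).choose (i - 1) : ℝ) * lam ^ (1 - (i : ℤ)))
              + ((n - 1).choose i : ℝ) * lam ^ (-(i : ℤ))) * π 0) ∧
    (1 / 2 : ℝ) * (1 + 1 / lam) ^ (-(n : ℤ)) ≤ π 0 :=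
  stmt16_general n hn lam hlam π hsum hdb
end
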